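/- arXiv:2104.01739 — 5 statements merged into one kernel-verified Lean document; each statement's English description precedes it below -/
import Mathlib

section
/- If a finite simple graph G contains a cycle as a subgraph, then in(G) ≥ 3. -/
open SimpleGraph


namespace Inspection

variable {V : Type*} {W : Type*}

/-- The boundary of a vertex set `X`: vertices of `X` having a neighbor outside `X`. -/
def boundary (G : SimpleGraph V) (X : Set V) : Set V :=
  {v | v ∈ X ∧ ∃ w, w ∉ X ∧ G.Adj v w}

/-- The set of neighbors of a vertex set `X`. -/
def nbrSet (G : SimpleGraph V) (X : Set V) : Set V :=
  {v | ∃ u ∈ X, G.Adj u v}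

/-- The fully cleared sets of a search `S` (indexed so that turn `t ≥ 1` inspects `S t`):
`FC 0 = ∅`, and `FC (t+1) = PC (t+1) \ ∂(PC (t+1))` where `PC (t+1) = FC t ∪ S (t+1)`. -/
def FC (G : SimpleGraph V) (S : ℕ → Set V) : ℕ → Set V
  | 0 => ∅
  | t + 1 => (FC G S t ∪ S (t + 1)) \ boundary G (FC G S t ∪ S (t + 1))

/-- There is a successful `k`-search on `G`: a finite sequence `S 1, ..., S ℓ` of sets of
size at most `k` whose final fully cleared set is all of `V`. -/
def SuccessfulSearch (G : SimpleGraph V) (k : ℕ) : Prop :=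
  ∃ (ℓ : ℕ) (S : ℕ → Set V),
    (∀ t, 1 ≤ t → t ≤ ℓ → (S t).ncard ≤ k) ∧ FC G S ℓ = Set.univ

/-- The inspection number of `G`: the least `k` admitting a successful `k`-search. -/
noncomputable def inspectionNumber (G : SimpleGraph V) : ℕ :=
  sInf {k | SuccessfulSearch G k}

/-- There is a successful monotonic `k`-search on `G`. -/
def SuccessfulMonotonicSearch (G : SimpleGraph V) (k : ℕ) : Prop :=
  ∃ (ℓ : ℕ) (S : ℕ → Set V),
    (∀ t, 1 ≤ t → t ≤ ℓ → (S t).ncard ≤ k) ∧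
    (∀ i j, i ≤ j → j ≤ ℓ → FC G S i ⊆ FC G S j) ∧
    FC G S ℓ = Set.univ

/-- The monotonic inspection number of `G`. -/
noncomputable def monoInspectionNumber (G : SimpleGraph V) : ℕ :=
  sInf {k | SuccessfulMonotonicSearch G k}

/-- A path decomposition `X 1, ..., X ℓ` of `G`: every edge is contained in some bag, and
for `i ≤ j ≤ k` we have `X i ∩ X k ⊆ X j`. -/
def IsPathDecomp (G : SimpleGraph V) (ℓ : ℕ) (X : ℕ → Set V) : Prop :=
  (∀ u v : V, G.Adj u v → ∃ i, 1 ≤ i ∧ i ≤ ℓ ∧ u ∈ X i ∧ v ∈ X i) ∧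
  (∀ i j k, 1 ≤ i → i ≤ j → j ≤ k → k ≤ ℓ → X i ∩ X k ⊆ X j)

/-- The pathwidth of `G`: the least `w` such that `G` has a path decomposition all of whose
bags have size at most `w + 1`. -/
noncomputable def pathwidth (G : SimpleGraph V) : ℕ :=
  sInf {w | ∃ (ℓ : ℕ) (X : ℕ → Set V), IsPathDecomp G ℓ X ∧
    ∀ i, 1 ≤ i → i ≤ ℓ → (X i).ncard ≤ w + 1}

/-- Witness data exhibiting `H` as a subdivision of `G`: an injection `f` of the vertices of
`G` into those of `H` and, for each edge of `G`, a path of `H` between the images of its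
endpoints, these paths being internally disjoint from each other and from the image of `f`,
and jointly covering all vertices and edges of `H`. -/
structure SubdivisionData (G : SimpleGraph V) (H : SimpleGraph W) where
  f : V → W
  inj : Function.Injective f
  walk : ∀ {u v : V}, G.Adj u v → H.Walk (f u) (f v)
  isPath : ∀ {u v : V} (h : G.Adj u v), (walk h).IsPath
  symm : ∀ {u v : V} (h : G.Adj u v), walk h.symm = (walk h).reverse
  disj : ∀ {u v x y : V} (h₁ : G.Adj u v) (h₂ : G.Adj x y), s(u, v) ≠ s(x, y) →
      ∀ w : W, w ∈ (walk h₁).support → w ∈ (walk h₂).support → w ∈ Set.range f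
  branch : ∀ {u v : V} (h : G.Adj u v) (w : W),
      w ∈ (walk h).support → w ∈ Set.range f → w = f u ∨ w = f v
  cover_vert : ∀ w : W, w ∈ Set.range f ∨ ∃ (u v : V) (h : G.Adj u v), w ∈ (walk h).support
  cover_edge : ∀ e ∈ H.edgeSet, ∃ (u v : V) (h : G.Adj u v), e ∈ (walk h).edges

/-- `H` is a subdivision of `G`. -/
def IsSubdivision (G : SimpleGraph V) (H : SimpleGraph W) : Prop :=
  Nonempty (SubdivisionData G H)

/-- The topological inspection number of `G`: the least `k` such that every subdivision of
`G` has a further subdivision with inspection number at most `k`. -/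
noncomputable def topInspectionNumber (G : SimpleGraph V) : ℕ :=
  sInf {k | ∀ (W' : Type) (H : SimpleGraph W'), IsSubdivision G H →
    ∃ (W'' : Type) (H' : SimpleGraph W''), IsSubdivision H H' ∧ inspectionNumber H' ≤ k}


lemma insert_neighborSet_subset_of_mem_FC_succ {G : SimpleGraph V} {S : ℕ → Set V} {t : ℕ}
    {z : V} (hz : z ∈ FC G S (t + 1)) :
    insert z (G.neighborSet z) ⊆ FC G S t ∪ S (t + 1) := by
  rintro w (rfl | hw)
  · exact hz.1
  · by_contra hwP
    exact hz.2 ⟨hz.1, w, hwP, hw⟩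

/-- A vertex of `H` cleared for the first time at step `t + 1` must be inspected in `S (t + 1)`
together with all its `H`-neighbours, none of which is cleared yet: that is `k + 1` vertices. -/
lemma disjoint_FC_verts_of_le_ncard_neighborSet [Finite V] {G : SimpleGraph V}
    {H : G.Subgraph} {S : ℕ → Set V} {k ℓ : ℕ}
    (hH : ∀ v ∈ H.verts, k ≤ (H.neighborSet v).ncard)
    (hS : ∀ t, 1 ≤ t → t ≤ ℓ → (S t).ncard ≤ k) :
    ∀ t ≤ ℓ, Disjoint (FC G S t) H.verts := by
  intro t
  induction t with
  | zero => simp [FC]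
  | succ t ih =>
    intro ht
    rw [Set.disjoint_right]
    intro z hzH hz
    have hnew : insert z (H.neighborSet z) ⊆ S (t + 1) := by
      intro w hw
      have hwH : w ∈ H.verts := by
        rcases hw with rfl | hw
        exacts [hzH, H.neighborSet_subset_verts z hw]
      have hwG : w ∈ insert z (G.neighborSet z) :=
        Set.insert_subset_insert (fun _ ↦ Subgraph.Adj.adj_sub) hw
      exact (insert_neighborSet_subset_of_mem_FC_succ hz hwG).resolve_left
        (Set.disjoint_right.mp (ih (by omega)) hwH)
    have hz_notMem : z ∉ H.neighborSet z := fun h ↦ h.ne rfl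
    have hcount : k + 1 ≤ k := calc
      k + 1 ≤ (insert z (H.neighborSet z)).ncard := by
        rw [Set.ncard_insert_of_notMem hz_notMem]
        exact Nat.succ_le_succ (hH z hzH)
      _ ≤ (S (t + 1)).ncard := Set.ncard_le_ncard hnew
      _ ≤ k := hS (t + 1) (by omega) ht
    omega

lemma successfulSearch_ncard_univ (G : SimpleGraph V) :
    SuccessfulSearch G (Set.univ : Set V).ncard :=
  ⟨1, fun _ ↦ Set.univ, fun _ _ _ ↦ le_rfl, by simp [FC, boundary]⟩

lemma lt_inspectionNumber_of_le_ncard_neighborSet [Finite V] {G : SimpleGraph V}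
    (H : G.Subgraph) (hne : H.verts.Nonempty) {k : ℕ}
    (hH : ∀ v ∈ H.verts, k ≤ (H.neighborSet v).ncard) :
    k < inspectionNumber G := by
  refine le_csInf (s := {m | SuccessfulSearch G m}) ⟨_, successfulSearch_ncard_univ G⟩ ?_
  rintro m ⟨ℓ, S, hS, hfin⟩
  by_contra! hm
  obtain ⟨v, hv⟩ := hne
  have hdisj := disjoint_FC_verts_of_le_ncard_neighborSet hH
    (fun t h₁ h₂ ↦ (hS t h₁ h₂).trans (Nat.lt_succ_iff.mp hm)) ℓ le_rfl
  rw [hfin] at hdisj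
  exact Set.disjoint_left.mp hdisj (Set.mem_univ v) hv

/-- If a finite simple graph `G` contains a cycle as a subgraph, then
`in(G) ≥ 3`. -/
theorem three_le_inspectionNumber_of_cycle {V : Type} [Fintype V] (G : SimpleGraph V)
    (h : ∃ (u : V) (c : G.Walk u u), c.IsCycle) :
    3 ≤ inspectionNumber G := by
  obtain ⟨u, c, hc⟩ := h
  exact lt_inspectionNumber_of_le_ncard_neighborSet c.toSubgraph
    ⟨u, c.start_mem_verts_toSubgraph⟩
    fun v hv ↦ (hc.ncard_neighborSet_toSubgraph_eq_two (c.mem_verts_toSubgraph.mp hv)).ge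

end Inspection
end

section
/- For all integers n, m ≥ 2, the inspection number of the n × m grid graph Γ_{n,m} equals min{n, m} + 1. -/
/-!
Sweeping the grid along its shorter side with a window of `min n m + 1` consecutive vertices
clears it. Conversely, with `k = min n m`, every vertex set of size in `(k.choose 2, k.choose 2 + k]`
has at least `k` boundary vertices (the extremal sets are corner triangles), so the uncleared part
of a `k`-search can never drop through that window.
-/

open SimpleGraph


namespace Inspection

variable {V : Type*} {W : Type*}

/-- The `n × m` grid graph: vertices `(i,j)` with `0 ≤ i < n`, `0 ≤ j < m`, and
`(a,b)` adjacent to `(c,d)` iff `|a−c| + |b−d| = 1`. -/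
def gridGraph (n m : ℕ) : SimpleGraph (Fin n × Fin m) where
  Adj a b := |(a.1 : ℤ) - (b.1 : ℤ)| + |(a.2 : ℤ) - (b.2 : ℤ)| = 1
  symm := by
    constructor
    intro a b h
    rw [abs_sub_comm ((b.1 : ℤ)) ((a.1 : ℤ)), abs_sub_comm ((b.2 : ℤ)) ((a.2 : ℤ))]
    exact h
  loopless := by constructor; intro a h; simp at h


section Search

variable {G : SimpleGraph V}

theorem SuccessfulSearch.mono {k k' : ℕ} (h : SuccessfulSearch G k) (hk : k ≤ k') :
    SuccessfulSearch G k' := by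
  obtain ⟨ℓ, S, hS, hFC⟩ := h
  exact ⟨ℓ, S, fun t ht₁ ht₂ => (hS t ht₁ ht₂).trans hk, hFC⟩

theorem inspectionNumber_eq_of_successfulSearch {k : ℕ} (h : SuccessfulSearch G (k + 1))
    (h' : ¬ SuccessfulSearch G k) : inspectionNumber G = k + 1 := by
  refine le_antisymm (Nat.sInf_le h) (le_csInf ⟨k + 1, h⟩ fun j hj => ?_)
  by_contra! hjk
  exact h' (SuccessfulSearch.mono hj (Nat.lt_succ_iff.mp hjk))

theorem successfulSearch_of_bandwidth [Finite V] (f : V → ℕ) (hf : Function.Injective f) {b : ℕ}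
    (hb : ∀ v w, G.Adj v w → f w ≤ f v + b) : SuccessfulSearch G (b + 1) := by
  obtain ⟨N, hN⟩ := (Set.finite_range f).bddAbove
  set S : ℕ → Set V := fun t => {v | t - 1 ≤ f v ∧ f v < t + b}
  have sweep : ∀ t, {v | f v < t} ⊆ FC G S t ∧ FC G S t ⊆ {v | f v < t + b} := by
    intro t
    induction t with
    | zero => simp [FC]
    | succ t ih =>
      have hPC : FC G S t ∪ S (t + 1) = {v | f v < t + 1 + b} := by
        ext v
        have h₁ := @ih.1 v
        have h₂ := @ih.2 v
        simp only [Set.mem_union, Set.mem_ofPred_eq, S] at h₁ h₂ ⊢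
        grind
      refine ⟨fun v hv => ?_, fun v hv => ?_⟩
      · simp only [FC, hPC, Set.mem_sdiff, Set.mem_ofPred_eq] at hv ⊢
        refine ⟨by omega, fun ⟨_, w, hw, hvw⟩ => hw ?_⟩
        have := hb v w hvw
        simp only [Set.mem_ofPred_eq]
        omega
      · simp only [FC, hPC] at hv
        have := hv.1
        simp only [Set.mem_ofPred_eq] at this ⊢
        omega
  refine ⟨N + 1, S, fun t ht _ => ?_, Set.eq_univ_of_forall fun v => (sweep (N + 1)).1 ?_⟩
  · calc (S t).ncard ≤ (Set.Ico (t - 1) (t + b)).ncard :=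
          Set.ncard_le_ncard_of_injOn f (fun v hv => hv) hf.injOn (Set.finite_Ico _ _)
      _ ≤ b + 1 := by rw [Set.ncard_Ico_nat]; omega
  · exact Nat.lt_succ_of_le (hN ⟨v, rfl⟩)

theorem boundary_compl_FC_succ_subset (S : ℕ → Set V) (t : ℕ) :
    boundary G (FC G S (t + 1))ᶜ ⊆ FC G S t ∪ S (t + 1) := by
  rintro v ⟨-, w, hw, hvw⟩
  rw [Set.notMem_compl_iff] at hw
  by_contra hv
  exact hw.2 ⟨hw.1, v, hv, hvw.symm⟩

theorem ncard_FC_succ_add_ncard_boundary_le [Finite V] (S : ℕ → Set V) (t : ℕ) :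
    (FC G S (t + 1)).ncard + (boundary G (FC G S (t + 1))ᶜ).ncard ≤
      (FC G S t).ncard + (S (t + 1)).ncard := by
  have hdisj : Disjoint (FC G S (t + 1)) (boundary G (FC G S (t + 1))ᶜ) :=
    Set.disjoint_of_subset_right (fun v hv => hv.1) disjoint_compl_right
  rw [← Set.ncard_union_eq hdisj]
  refine (Set.ncard_le_ncard (Set.union_subset ?_ (boundary_compl_FC_succ_subset S t))).trans
    (Set.ncard_union_le _ _)
  exact Set.sdiff_subset

/-- Each turn the uncleared set shrinks by at most `k` minus the size of its new boundary, so it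
can never enter the window `(a, a + k]`, let alone become empty. -/
theorem not_successfulSearch_of_le_ncard_boundary [Finite V] {a k : ℕ} (hV : a + k < Nat.card V)
    (hiso : ∀ X : Set V, a < X.ncard → X.ncard ≤ a + k → k ≤ (boundary G X).ncard) :
    ¬ SuccessfulSearch G k := by
  rintro ⟨ℓ, S, hS, hFC⟩
  have uncleared : ∀ t ≤ ℓ, a + k < (FC G S t)ᶜ.ncard := by
    intro t
    induction t with
    | zero => simpa [FC] using hV
    | succ t ih =>
      intro ht
      have hstep := ncard_FC_succ_add_ncard_boundary_le (G := G) S t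
      have hSt := hS (t + 1) (by omega) ht
      have e₁ := Set.ncard_add_ncard_compl (FC G S t)
      have e₂ := Set.ncard_add_ncard_compl (FC G S (t + 1))
      have iht := ih (by omega)
      by_contra! hle
      have := hiso _ (by omega) hle
      omega
  simpa [hFC] using uncleared ℓ le_rfl

end Search

theorem pathGraph.exists_adj_mem_notMem_of_le {k : ℕ} {X : Set (Fin k)} {a c : Fin k}
    (hac : a ≤ c) (ha : a ∈ X) (hc : c ∉ X) :
    ∃ i ∈ Set.uIcc a c, ∃ j ∈ Set.uIcc a c, (pathGraph k).Adj i j ∧ i ∈ X ∧ j ∉ X := by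
  classical
  obtain ⟨i, hi, hmax⟩ :=
    ((Finset.Icc a c).filter (· ∈ X)).exists_max_image id ⟨a, by simp [ha, hac]⟩
  simp only [Finset.mem_filter, Finset.mem_Icc, id] at hi hmax
  have hic : i < c := lt_of_le_of_ne hi.1.2 fun h => hc (h ▸ hi.2)
  set j : Fin k := ⟨i + 1, by omega⟩
  have hj : a ≤ j ∧ j ≤ c := by simp only [Fin.le_def, j] at hi hic ⊢; omega
  refine ⟨i, Set.mem_uIcc_of_le hi.1.1 hi.1.2, j, Set.mem_uIcc_of_le hj.1 hj.2,
    pathGraph_adj.mpr (Or.inl rfl), hi.2, fun hjX => ?_⟩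
  have := hmax j ⟨hj, hjX⟩
  simp only [Fin.le_def, j] at this
  omega

theorem pathGraph.exists_adj_mem_notMem {k : ℕ} {X : Set (Fin k)} {a c : Fin k}
    (ha : a ∈ X) (hc : c ∉ X) :
    ∃ i ∈ Set.uIcc a c, ∃ j ∈ Set.uIcc a c, (pathGraph k).Adj i j ∧ i ∈ X ∧ j ∉ X := by
  rcases le_total a c with hac | hca
  · exact exists_adj_mem_notMem_of_le hac ha hc
  · obtain ⟨i, hi, j, hj, hij, hiX, hjX⟩ :=
      exists_adj_mem_notMem_of_le (X := Xᶜ) hca hc (not_not.mpr ha)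
    rw [Set.uIcc_comm] at hi hj
    exact ⟨j, hj, i, hi, hij.symm, not_not.mp hjX, hiX⟩

theorem exists_mem_boundary_of_pathGraph_hom {G : SimpleGraph V} {k : ℕ}
    (γ : pathGraph k →g G) {X : Set V} {a c : Fin k} (ha : γ a ∈ X) (hc : γ c ∉ X) :
    ∃ i ∈ Set.uIcc a c, γ i ∈ boundary G X := by
  obtain ⟨i, hi, j, -, hij, hiX, hjX⟩ := pathGraph.exists_adj_mem_notMem (X := γ ⁻¹' X) ha hc
  exact ⟨i, hi, hiX, γ j, hjX, γ.map_adj hij⟩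

/-- With witnesses `p z` in the column of `z` towards `r` and `q z` in its row towards `c`, the map
`z ↦ s(p z, q z)` is injective on `Z` (two points with swapped witnesses share their row and
column) and misses the diagonal of `B \ Z`. -/
theorem card_add_card_sdiff_le_choose {α β : Type*} [DistribLattice α] [DistribLattice β]
    [DecidableEq α] [DecidableEq β] (Z B : Finset (α × β)) (r : α) (c : β)
    (hcol : ∀ z ∈ Z, ∃ p ∈ B, p.2 = z.2 ∧ p.1 ∈ Set.uIcc z.1 r)
    (hrow : ∀ z ∈ Z, ∃ q ∈ B, q.1 = z.1 ∧ q.2 ∈ Set.uIcc z.2 c) :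
    Z.card + (B \ Z).card ≤ (B.card + 1).choose 2 := by
  choose! p hpB hp₂ hp₁ using hcol
  choose! q hqB hq₁ hq₂ using hrow
  have hpq : ∀ z ∈ Z, z = ((q z).1, (p z).2) := fun z hz => by rw [hq₁ z hz, hp₂ z hz]
  have hinj : Set.InjOn (fun z => s(p z, q z)) Z := by
    intro z hz w hw h
    rcases Sym2.eq_iff.mp h with ⟨h₁, h₂⟩ | ⟨h₁, h₂⟩
    · rw [hpq z hz, hpq w hw, h₁, h₂]
    · refine Prod.ext (Set.eq_of_mem_uIcc_of_mem_uIcc (c := r) ?_ ?_)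
        (Set.eq_of_mem_uIcc_of_mem_uIcc (c := c) ?_ ?_)
      · simpa only [← hq₁ z hz, h₂] using hp₁ w hw
      · simpa only [← hq₁ w hw, ← h₁] using hp₁ z hz
      · simpa only [← hp₂ z hz, h₁] using hq₂ w hw
      · simpa only [← hp₂ w hw, ← h₂] using hq₂ z hz
  have hdisj : Disjoint (Z.image fun z => s(p z, q z)) ((B \ Z).image Sym2.diag) := by
    refine Finset.disjoint_left.mpr fun x hx hx' => ?_
    obtain ⟨z, hz, rfl⟩ := Finset.mem_image.mp hx
    obtain ⟨b, hb, hbz⟩ := Finset.mem_image.mp hx'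
    obtain ⟨h₁, h₂⟩ : b = p z ∧ b = q z := by
      simp only [Sym2.diag, Sym2.eq_iff] at hbz
      tauto
    rw [hpq z hz, ← h₁, ← h₂] at hz
    exact (Finset.mem_sdiff.mp hb).2 hz
  calc Z.card + (B \ Z).card
      = (Z.image fun z => s(p z, q z)).card + ((B \ Z).image Sym2.diag).card := by
        rw [Finset.card_image_of_injOn hinj, Finset.card_image_of_injective _ Sym2.diag_injective]
    _ = ((Z.image fun z => s(p z, q z)) ∪ (B \ Z).image Sym2.diag).card :=
        (Finset.card_union_of_disjoint hdisj).symm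
    _ ≤ B.sym2.card := by
        refine Finset.card_le_card (Finset.union_subset ?_ ?_) <;>
          intro x hx <;> obtain ⟨z, hz, rfl⟩ := Finset.mem_image.mp hx
        · exact Finset.mk_mem_sym2_iff.mpr ⟨hpB z hz, hqB z hz⟩
        · exact Finset.diag_mem_sym2_iff.mpr (Finset.mem_sdiff.mp hz).1
    _ = (B.card + 1).choose 2 := Finset.card_sym2 B

theorem choose_two_succ_add_choose_two (j : ℕ) : (j + 1).choose 2 + j.choose 2 = j * j := by
  induction j with
  | zero => rfl
  | succ j ih =>
    rw [Nat.choose_succ_succ' (j + 1), Nat.choose_one_right, Nat.choose_succ_succ' j,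
      Nat.choose_one_right] at *
    nlinarith

theorem gridGraph_eq_boxProd (n m : ℕ) : gridGraph n m = pathGraph n □ pathGraph m := by
  ext v w
  simp only [boxProd_adj, pathGraph_adj, Fin.ext_iff]
  change |(v.1 : ℤ) - w.1| + |(v.2 : ℤ) - w.2| = 1 ↔ _
  rw [abs_eq_max_neg, abs_eq_max_neg]
  omega

section Grid

variable {n m : ℕ}

theorem successfulSearch_grid_left : SuccessfulSearch (pathGraph n □ pathGraph m) (n + 1) := by
  refine successfulSearch_of_bandwidth (fun v => (finProdFinEquiv (v.2, v.1) : ℕ))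
    (Fin.val_injective.comp (finProdFinEquiv.injective.comp Prod.swap_injective)) fun v w h => ?_
  simp only [boxProd_adj, pathGraph_adj, Fin.ext_iff] at h
  simp only [finProdFinEquiv_apply_val]
  rcases h with ⟨h | h, e⟩ | ⟨h | h, e⟩ <;> rw [e] <;> nlinarith [v.1.2, w.1.2]

theorem successfulSearch_grid_right : SuccessfulSearch (pathGraph n □ pathGraph m) (m + 1) := by
  refine successfulSearch_of_bandwidth (fun v => (finProdFinEquiv v : ℕ))
    (Fin.val_injective.comp finProdFinEquiv.injective) fun v w h => ?_
  simp only [boxProd_adj, pathGraph_adj, Fin.ext_iff] at h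
  simp only [finProdFinEquiv_apply_val]
  rcases h with ⟨h | h, e⟩ | ⟨h | h, e⟩ <;> rw [e] <;> nlinarith [v.2.2, w.2.2]

theorem exists_mem_boundary_grid_col {X : Set (Fin n × Fin m)} {i i' : Fin n} {j : Fin m}
    (h : (i, j) ∈ X) (h' : (i', j) ∉ X) :
    ∃ p ∈ boundary (pathGraph n □ pathGraph m) X, p.2 = j ∧ p.1 ∈ Set.uIcc i i' := by
  obtain ⟨r, hr, hb⟩ :=
    exists_mem_boundary_of_pathGraph_hom (boxProdLeft _ (pathGraph m) j).toHom h h'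
  exact ⟨_, hb, rfl, hr⟩

theorem exists_mem_boundary_grid_row {X : Set (Fin n × Fin m)} {i : Fin n} {j j' : Fin m}
    (h : (i, j) ∈ X) (h' : (i, j') ∉ X) :
    ∃ p ∈ boundary (pathGraph n □ pathGraph m) X, p.1 = i ∧ p.2 ∈ Set.uIcc j j' := by
  obtain ⟨r, hr, hb⟩ :=
    exists_mem_boundary_of_pathGraph_hom (boxProdRight (pathGraph n) _ i).toHom h h'
  exact ⟨_, hb, rfl, hr⟩

/-- Fewer than `min n m` boundary vertices miss some row and some column, which then lie entirely
inside or entirely outside `X`; `card_add_card_sdiff_le_choose` bounds the side they miss. -/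
theorem le_ncard_boundary_grid (hn : 2 ≤ n) (hm : 2 ≤ m) (X : Set (Fin n × Fin m))
    (h₁ : (min n m).choose 2 < X.ncard) (h₂ : X.ncard ≤ (min n m).choose 2 + min n m) :
    min n m ≤ (boundary (pathGraph n □ pathGraph m) X).ncard := by
  classical
  set k := min n m
  obtain ⟨B, hBX⟩ : ∃ B : Finset (Fin n × Fin m), ↑B = boundary (pathGraph n □ pathGraph m) X :=
    ⟨_, Set.coe_toFinset _⟩
  have hmemB : ∀ p, p ∈ B ↔ p ∈ boundary (pathGraph n □ pathGraph m) X := fun p => by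
    rw [← hBX, Finset.mem_coe]
  by_contra! hB
  rw [← hBX, Set.ncard_coe_finset] at hB
  rw [Set.ncard_eq_toFinset_card'] at h₁ h₂
  obtain ⟨r, -, hr⟩ := Finset.exists_mem_notMem_of_card_lt_card (s := B.image Prod.fst)
    (t := Finset.univ) (by simpa using Finset.card_image_le.trans_lt (hB.trans_le (min_le_left _ _)))
  obtain ⟨c, -, hc⟩ := Finset.exists_mem_notMem_of_card_lt_card (s := B.image Prod.snd)
    (t := Finset.univ) (by simpa using Finset.card_image_le.trans_lt (hB.trans_le (min_le_right _ _)))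
  have hrow : ∀ j j', (r, j) ∈ X → (r, j') ∈ X := fun j j' h => by
    by_contra h'
    obtain ⟨p, hp, hpr, -⟩ := exists_mem_boundary_grid_row h h'
    exact hr (Finset.mem_image.mpr ⟨p, (hmemB p).mpr hp, hpr⟩)
  have hcol : ∀ i i', (i, c) ∈ X → (i', c) ∈ X := fun i i' h => by
    by_contra h'
    obtain ⟨p, hp, hpc, -⟩ := exists_mem_boundary_grid_col h h'
    exact hc (Finset.mem_image.mpr ⟨p, (hmemB p).mpr hp, hpc⟩)
  by_cases hrc : (r, c) ∈ X
  · have hstair := card_add_card_sdiff_le_choose Xᶜ.toFinset B r c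
      (fun z hz => by
        obtain ⟨p, hp, hp₂, hp₁⟩ := exists_mem_boundary_grid_col (hrow c z.2 hrc)
          (Set.mem_toFinset.mp hz)
        exact ⟨p, (hmemB p).mpr hp, hp₂, Set.uIcc_comm r z.1 ▸ hp₁⟩)
      (fun z hz => by
        obtain ⟨q, hq, hq₁, hq₂⟩ := exists_mem_boundary_grid_row (hcol r z.1 hrc)
          (Set.mem_toFinset.mp hz)
        exact ⟨q, (hmemB q).mpr hq, hq₁, Set.uIcc_comm c z.2 ▸ hq₂⟩)
    have hBsdiff : B \ Xᶜ.toFinset = B := Finset.sdiff_eq_self_of_disjoint <|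
      Finset.disjoint_left.mpr fun p hp hpX =>
        Set.mem_toFinset.mp hpX ((hmemB p).mp hp).1
    rw [hBsdiff, Nat.choose_succ_succ', Nat.choose_one_right] at hstair
    have hsum := Set.ncard_add_ncard_compl X
    rw [Set.ncard_eq_toFinset_card', Set.ncard_eq_toFinset_card', Nat.card_prod, Nat.card_fin,
      Nat.card_fin] at hsum
    have hkk : k * k ≤ n * m := Nat.mul_le_mul (min_le_left _ _) (min_le_right _ _)
    obtain ⟨j, hj⟩ : ∃ j, k = j + 1 := ⟨k - 1, by omega⟩
    have hBj : B.card.choose 2 ≤ j.choose 2 := Nat.choose_le_choose 2 (by omega)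
    have := choose_two_succ_add_choose_two j
    rw [hj] at h₂ hkk
    nlinarith
  · have hstair := card_add_card_sdiff_le_choose X.toFinset B r c
      (fun z hz => by
        obtain ⟨p, hp, hp₂, hp₁⟩ := exists_mem_boundary_grid_col (Set.mem_toFinset.mp hz)
          fun h => hrc (hrow z.2 c h)
        exact ⟨p, (hmemB p).mpr hp, hp₂, hp₁⟩)
      (fun z hz => by
        obtain ⟨q, hq, hq₁, hq₂⟩ := exists_mem_boundary_grid_row (Set.mem_toFinset.mp hz)
          fun h => hrc (hcol z.1 r h)
        exact ⟨q, (hmemB q).mpr hq, hq₁, hq₂⟩)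
    have := Nat.choose_le_choose 2 (show B.card + 1 ≤ k from hB)
    omega

end Grid

/-- For all `n, m ≥ 2`, the inspection number of the `n × m` grid graph
equals `min n m + 1`. -/
theorem inspectionNumber_gridGraph (n m : ℕ) (hn : 2 ≤ n) (hm : 2 ≤ m) :
    inspectionNumber (gridGraph n m) = min n m + 1 := by
  rw [gridGraph_eq_boxProd]
  refine inspectionNumber_eq_of_successfulSearch ?_ ?_
  · rcases min_choice n m with h | h <;> rw [h]
    exacts [successfulSearch_grid_left, successfulSearch_grid_right]
  · refine not_successfulSearch_of_le_ncard_boundary ?_ (le_ncard_boundary_grid hn hm)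
    obtain ⟨j, hj⟩ : ∃ j, min n m = j + 1 := ⟨min n m - 1, by omega⟩
    have hkk : min n m * min n m ≤ n * m := Nat.mul_le_mul (min_le_left _ _) (min_le_right _ _)
    have := choose_two_succ_add_choose_two j
    rw [Nat.card_prod, Nat.card_fin, Nat.card_fin, hj]
    rw [hj] at hkk
    nlinarith

end Inspection
end

section
/- For every connected finite simple graph G, the monotonic inspection number satisfies in_m(G) = pw(G) + 1, where pw(G) denotes the pathwidth of G. -/
open SimpleGraph


namespace Inspection

variable {V : Type*} {W : Type*}

/-!
A path decomposition `X` is itself a monotonic search: after `t` steps the cleared set is the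
union of the first `t` bags minus its boundary, because that boundary lies in bag `t + 1`.
Conversely, a monotonic search `S` yields a path decomposition whose `t`-th bag consists of
the vertices first cleared at step `t` together with the uncleared neighbours of the cleared
set; monotonicity forces all of them to be inspected at step `t`, so the bag lies in `S t`.
-/

def bagUnion (X : ℕ → Set V) (t : ℕ) : Set V := {v | ∃ i, 1 ≤ i ∧ i ≤ t ∧ v ∈ X i}

@[simp]
lemma bagUnion_zero (X : ℕ → Set V) : bagUnion X 0 = ∅ :=
  Set.eq_empty_of_forall_notMem fun _ ⟨_, h1, h0, _⟩ => by omega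

lemma bagUnion_succ (X : ℕ → Set V) (t : ℕ) :
    bagUnion X (t + 1) = bagUnion X t ∪ X (t + 1) := by
  ext v
  constructor
  · rintro ⟨i, h1, hi, hv⟩
    rcases Nat.lt_or_eq_of_le hi with hi | rfl
    · exact Or.inl ⟨i, h1, by omega, hv⟩
    · exact Or.inr hv
  · rintro (⟨i, h1, hi, hv⟩ | hv)
    · exact ⟨i, h1, by omega, hv⟩
    · exact ⟨t + 1, by omega, le_rfl, hv⟩

lemma bagUnion_mono (X : ℕ → Set V) : Monotone (bagUnion X) :=
  fun _ _ hst _ ⟨i, h1, hi, hv⟩ => ⟨i, h1, hi.trans hst, hv⟩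

@[simp]
lemma boundary_univ (G : SimpleGraph V) : boundary G Set.univ = ∅ := by
  simp [boundary]

lemma diff_boundary_mono (G : SimpleGraph V) : Monotone fun X : Set V => X \ boundary G X :=
  fun _ _ hXY _ ⟨hv, hvb⟩ =>
    ⟨hXY hv, fun ⟨_, w, hw, hvw⟩ => hvb ⟨hv, w, fun hwX => hw (hXY hwX), hvw⟩⟩

lemma FC_succ (G : SimpleGraph V) (S : ℕ → Set V) (t : ℕ) :
    FC G S (t + 1) = (FC G S t ∪ S (t + 1)) \ boundary G (FC G S t ∪ S (t + 1)) := rfl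

lemma FC_subset_bagUnion (G : SimpleGraph V) (S : ℕ → Set V) (t : ℕ) :
    FC G S t ⊆ bagUnion S t := by
  induction t with
  | zero => simp [FC]
  | succ t ih =>
    rw [FC_succ, bagUnion_succ]
    exact Set.sdiff_subset.trans (Set.union_subset_union_left _ ih)

lemma pos_of_successfulSearch [Finite V] [Nonempty V] {G : SimpleGraph V} {k : ℕ}
    (h : SuccessfulSearch G k) : 0 < k := by
  obtain ⟨ℓ, S, hsize, hfin⟩ := h
  obtain ⟨i, hi1, hiℓ, hv⟩ :=
    FC_subset_bagUnion G S ℓ (hfin ▸ Set.mem_univ (Classical.arbitrary V))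
  exact ((Set.ncard_pos (Set.toFinite _)).2 ⟨_, hv⟩).trans_le (hsize i hi1 hiℓ)

namespace IsPathDecomp

variable {G : SimpleGraph V} {ℓ : ℕ} {X : ℕ → Set V}

lemma boundary_bagUnion_subset (hX : IsPathDecomp G ℓ X) (t : ℕ) :
    boundary G (bagUnion X t) ⊆ X (t + 1) := by
  rintro v ⟨⟨i, hi1, hit, hvi⟩, w, hw, hvw⟩
  obtain ⟨j, hj1, hjℓ, hvj, hwj⟩ := hX.1 v w hvw
  have htj : t + 1 ≤ j := by
    by_contra! hjt
    exact hw ⟨j, hj1, by omega, hwj⟩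
  exact hX.2 i (t + 1) j hi1 (by omega) htj hjℓ ⟨hvi, hvj⟩

lemma FC_eq (hX : IsPathDecomp G ℓ X) (t : ℕ) :
    FC G X t = bagUnion X t \ boundary G (bagUnion X t) := by
  induction t with
  | zero => simp [FC]
  | succ t ih =>
    have hPC : FC G X t ∪ X (t + 1) = bagUnion X (t + 1) := by
      rw [ih, bagUnion_succ, ← Set.union_eq_self_of_subset_left (hX.boundary_bagUnion_subset t),
        ← Set.union_assoc, Set.sdiff_union_self, Set.union_assoc]
    rw [FC_succ, hPC]

lemma FC_mono (hX : IsPathDecomp G ℓ X) : Monotone (FC G X) := by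
  intro s t hst
  rw [hX.FC_eq, hX.FC_eq]
  exact diff_boundary_mono G (bagUnion_mono X hst)

lemma support_subset_bagUnion (hX : IsPathDecomp G ℓ X) : G.support ⊆ bagUnion X ℓ := by
  rintro v ⟨w, hvw⟩
  obtain ⟨i, hi1, hiℓ, hvi, -⟩ := hX.1 v w hvw
  exact ⟨i, hi1, hiℓ, hvi⟩

lemma successfulMonotonicSearch {k : ℕ} (hX : IsPathDecomp G ℓ X)
    (hsize : ∀ i, 1 ≤ i → i ≤ ℓ → (X i).ncard ≤ k)
    (hcover : bagUnion X ℓ = Set.univ) :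
    SuccessfulMonotonicSearch G k :=
  ⟨ℓ, X, hsize, fun _ _ hij _ => hX.FC_mono hij, by rw [hX.FC_eq, hcover, boundary_univ,
    Set.sdiff_empty]⟩

end IsPathDecomp

lemma isPathDecomp_univ (G : SimpleGraph V) : IsPathDecomp G 1 fun _ => Set.univ :=
  ⟨fun _ _ _ => ⟨1, le_rfl, le_rfl, trivial, trivial⟩, fun _ _ _ _ _ _ _ _ _ => trivial⟩

lemma bagUnion_univ : bagUnion (fun _ => (Set.univ : Set V)) 1 = Set.univ :=
  Set.eq_univ_of_forall fun _ => ⟨1, le_rfl, le_rfl, trivial⟩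

lemma exists_isPathDecomp_ncard_le_pathwidth_add_one (G : SimpleGraph V) :
    ∃ (ℓ : ℕ) (X : ℕ → Set V), IsPathDecomp G ℓ X ∧
      ∀ i, 1 ≤ i → i ≤ ℓ → (X i).ncard ≤ pathwidth G + 1 := by
  refine Nat.sInf_mem (s := {w | ∃ (ℓ : ℕ) (X : ℕ → Set V), IsPathDecomp G ℓ X ∧
    ∀ i, 1 ≤ i → i ≤ ℓ → (X i).ncard ≤ w + 1}) ⟨Nat.card V, 1, fun _ => Set.univ,
      isPathDecomp_univ G, fun _ _ _ => ?_⟩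
  rw [Set.ncard_univ]
  exact Nat.le_succ _

lemma successfulMonotonicSearch_pathwidth_add_one {G : SimpleGraph V} (hG : G.Connected) :
    SuccessfulMonotonicSearch G (pathwidth G + 1) := by
  rcases subsingleton_or_nontrivial V with hV | hV
  · refine (isPathDecomp_univ G).successfulMonotonicSearch (fun _ _ _ => ?_) bagUnion_univ
    rw [Set.ncard_univ]
    exact (Finite.card_le_one_iff_subsingleton.2 hV).trans (Nat.le_add_left _ _)
  · obtain ⟨ℓ, X, hX, hsize⟩ := exists_isPathDecomp_ncard_le_pathwidth_add_one G
    refine hX.successfulMonotonicSearch hsize (Set.eq_univ_of_univ_subset ?_)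
    exact hG.preconnected.support_eq_univ ▸ hX.support_subset_bagUnion

section SearchBag

variable {G : SimpleGraph V} {S : ℕ → Set V} {ℓ : ℕ}

def searchBag (G : SimpleGraph V) (S : ℕ → Set V) (t : ℕ) : Set V :=
  (FC G S t \ FC G S (t - 1)) ∪ (nbrSet G (FC G S t) \ FC G S t)

lemma searchBag_subset (hmono : ∀ i j, i ≤ j → j ≤ ℓ → FC G S i ⊆ FC G S j) {t : ℕ}
    (ht1 : 1 ≤ t) (htℓ : t ≤ ℓ) : searchBag G S t ⊆ S t := by
  obtain ⟨s, rfl⟩ : ∃ s, t = s + 1 := ⟨t - 1, by omega⟩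
  rintro v (⟨hv, hvs⟩ | ⟨⟨x, hx, hxv⟩, hv⟩)
  · exact (Set.sdiff_subset hv).resolve_left hvs
  · -- `v` borders the cleared vertex `x`, so it was inspected, and it was not cleared before
    have hvPC : v ∈ FC G S s ∪ S (s + 1) := by
      by_contra hvPC
      exact hx.2 ⟨hx.1, v, hvPC, hxv⟩
    exact hvPC.resolve_left fun hvs => hv (hmono s (s + 1) (by omega) htℓ hvs)

lemma mem_searchBag_of_adj {t : ℕ} {u v : V} (huv : G.Adj u v) (hu : u ∈ FC G S t)
    (hu' : u ∉ FC G S (t - 1)) (hv' : v ∉ FC G S (t - 1)) :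
    u ∈ searchBag G S t ∧ v ∈ searchBag G S t := by
  refine ⟨Or.inl ⟨hu, hu'⟩, ?_⟩
  by_cases hv : v ∈ FC G S t
  · exact Or.inl ⟨hv, hv'⟩
  · exact Or.inr ⟨⟨u, hu, huv⟩, hv⟩

lemma exists_adj_mem_searchBag (hfin : FC G S ℓ = Set.univ) {u v : V} (huv : G.Adj u v) :
    ∃ i, 1 ≤ i ∧ i ≤ ℓ ∧ u ∈ searchBag G S i ∧ v ∈ searchBag G S i := by
  classical
  have hex : ∃ t, u ∈ FC G S t ∨ v ∈ FC G S t := ⟨ℓ, by simp [hfin]⟩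
  -- the first step at which an endpoint of the edge is cleared
  set t := Nat.find hex
  have ht : u ∈ FC G S t ∨ v ∈ FC G S t := Nat.find_spec hex
  have ht1 : 1 ≤ t := Nat.one_le_iff_ne_zero.2 fun h0 => by simp [h0, FC] at ht
  have htℓ : t ≤ ℓ := Nat.find_min' hex (by simp [hfin])
  have hbefore : u ∉ FC G S (t - 1) ∧ v ∉ FC G S (t - 1) :=
    not_or.1 (Nat.find_min hex (by omega))
  refine ⟨t, ht1, htℓ, ?_⟩
  rcases ht with hu | hv
  · exact mem_searchBag_of_adj huv hu hbefore.1 hbefore.2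
  · exact (mem_searchBag_of_adj huv.symm hv hbefore.2 hbefore.1).symm

lemma notMem_FC_pred_of_mem_searchBag
    (hmono : ∀ i j, i ≤ j → j ≤ ℓ → FC G S i ⊆ FC G S j) {t : ℕ} (htℓ : t ≤ ℓ)
    {v : V} (hv : v ∈ searchBag G S t) : v ∉ FC G S (t - 1) := by
  rcases hv with ⟨-, hv⟩ | ⟨-, hv⟩
  · exact hv
  · exact fun hv' => hv (hmono (t - 1) t (Nat.sub_le t 1) htℓ hv')

lemma searchBag_inter_subset (hmono : ∀ i j, i ≤ j → j ≤ ℓ → FC G S i ⊆ FC G S j)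
    {i j k : ℕ} (hij : i ≤ j) (hjk : j ≤ k) (hkℓ : k ≤ ℓ) :
    searchBag G S i ∩ searchBag G S k ⊆ searchBag G S j := by
  rintro v ⟨hvi, hvk⟩
  have hvk' := notMem_FC_pred_of_mem_searchBag hmono hkℓ hvk
  rcases Nat.eq_or_lt_of_le (hij.trans hjk) with rfl | hik
  · rwa [Nat.le_antisymm hjk hij]
  have hvFi : v ∉ FC G S i := fun hv => hvk' (hmono i (k - 1) (by omega) (by omega) hv)
  obtain ⟨x, hxi, hxv⟩ : v ∈ nbrSet G (FC G S i) := by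
    rcases hvi with ⟨hv, -⟩ | ⟨hv, -⟩
    · exact absurd hv hvFi
    · exact hv
  by_cases hvj : v ∈ FC G S j
  · obtain rfl : j = k := by
      by_contra hjk'
      exact hvk' (hmono j (k - 1) (by omega) (by omega) hvj)
    exact hvk
  · exact Or.inr ⟨⟨x, hmono i j hij (hjk.trans hkℓ) hxi, hxv⟩, hvj⟩

lemma isPathDecomp_searchBag (hmono : ∀ i j, i ≤ j → j ≤ ℓ → FC G S i ⊆ FC G S j)
    (hfin : FC G S ℓ = Set.univ) : IsPathDecomp G ℓ (searchBag G S) :=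
  ⟨fun _ _ huv => exists_adj_mem_searchBag hfin huv,
    fun _ _ _ _ hij hjk hkℓ => searchBag_inter_subset hmono hij hjk hkℓ⟩

end SearchBag

lemma pathwidth_add_one_le [Finite V] [Nonempty V] {G : SimpleGraph V} {k : ℕ}
    (h : SuccessfulMonotonicSearch G k) : pathwidth G + 1 ≤ k := by
  obtain ⟨ℓ, S, hsize, hmono, hfin⟩ := h
  have hk : 0 < k := pos_of_successfulSearch ⟨ℓ, S, hsize, hfin⟩
  have hpw : pathwidth G ≤ k - 1 :=
    Nat.sInf_le ⟨ℓ, searchBag G S, isPathDecomp_searchBag hmono hfin, fun i hi1 hiℓ =>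
      (Set.ncard_le_ncard (searchBag_subset hmono hi1 hiℓ)).trans
        ((hsize i hi1 hiℓ).trans (by omega))⟩
  omega

/-- For every connected finite simple graph `G`, the monotonic inspection
number equals the pathwidth plus one. -/
theorem monoInspectionNumber_eq_pathwidth {V : Type} [Fintype V] (G : SimpleGraph V)
    (hG : G.Connected) :
    monoInspectionNumber G = pathwidth G + 1 := by
  have hsearch := successfulMonotonicSearch_pathwidth_add_one hG
  have : Nonempty V := hG.nonempty
  exact le_antisymm (Nat.sInf_le hsearch) (pathwidth_add_one_le
    (Nat.sInf_mem (⟨_, hsearch⟩ : {k | SuccessfulMonotonicSearch G k}.Nonempty)))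

end Inspection
end

section
/- For every finite simple graph G, the topological inspection number satisfies in_t(G) ≤ |V(G)| + 2. -/
open SimpleGraph


namespace Inspection

variable {V : Type*} {W : Type*}

/-! Take `H' = H`. With `F` the branch vertices of the subdivision `H`, a set `B ⊇ F` whose
boundary lies in `F` is cheap to hold: its fully cleared part misses at most `|F| ≤ |V(G)|`
vertices. Sweep the subdivided edges one at a time, adding the vertices of each path in order;
since interior vertices of a path have no neighbours off the path, the boundary of the current
set stays inside `F` plus the vertex just added, so each round inspects at most `|F| + 2`
vertices, and after the last path the cleared set is everything. -/

section Search

variable {H : SimpleGraph W} {k : ℕ}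

/-- `P` and `Q` are consecutive partially cleared sets of a `k`-search: the round turning
`P` into `Q` inspects `Q \ FC`, where `FC = P \ ∂P` is what `P` leaves cleared. -/
def SearchStep (H : SimpleGraph W) (k : ℕ) (P Q : Set W) : Prop :=
  P ⊆ Q ∧ (Q \ (P \ boundary H P)).ncard ≤ k

lemma FC_congr {S S' : ℕ → Set W} {t : ℕ} (h : ∀ s, 1 ≤ s → s ≤ t → S s = S' s) :
    FC H S t = FC H S' t := by
  induction t with
  | zero => rfl
  | succ t ih => simp only [FC, ih fun s hs hst => h s hs (by omega), h (t + 1) (by omega) le_rfl]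

lemma exists_FC_eq_of_reflTransGen {Q : Set W}
    (hQ : Relation.ReflTransGen (SearchStep H k) ∅ Q) :
    ∃ (ℓ : ℕ) (S : ℕ → Set W),
      (∀ t, 1 ≤ t → t ≤ ℓ → (S t).ncard ≤ k) ∧ FC H S ℓ = Q \ boundary H Q := by
  induction hQ with
  | refl => exact ⟨0, fun _ => ∅, by omega, by simp [FC]⟩
  | @tail P Q _ hPQ ih =>
    obtain ⟨ℓ, S, hS, hFC⟩ := ih
    set S' := Function.update S (ℓ + 1) (Q \ (P \ boundary H P)) with hS'
    have hFC' : FC H S' ℓ = FC H S ℓ :=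
      FC_congr fun s _ hs => Function.update_of_ne (by omega) _ _
    refine ⟨ℓ + 1, S', fun t h1 ht => ?_, ?_⟩
    · rcases Nat.lt_or_eq_of_le ht with ht | rfl
      · rw [hS', Function.update_of_ne (by omega)]
        exact hS t h1 (by omega)
      · rw [hS', Function.update_self]
        exact hPQ.2
    · change (FC H S' ℓ ∪ S' (ℓ + 1)) \ boundary H (FC H S' ℓ ∪ S' (ℓ + 1)) = _
      rw [hFC', hFC, hS', Function.update_self, Set.union_sdiff_cancel (Set.sdiff_subset.trans hPQ.1)]

lemma successfulSearch_of_reflTransGen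
    (h : Relation.ReflTransGen (SearchStep H k) ∅ Set.univ) : SuccessfulSearch H k := by
  obtain ⟨ℓ, S, hS, hFC⟩ := exists_FC_eq_of_reflTransGen h
  exact ⟨ℓ, S, hS, by simpa [boundary] using hFC⟩

lemma searchStep_insert [Finite W] {P : Set W} (x : W) (h : (boundary H P).ncard < k) :
    SearchStep H k P (insert x P) := by
  refine ⟨Set.subset_insert x P, ?_⟩
  calc (insert x P \ (P \ boundary H P)).ncard ≤ (insert x (boundary H P)).ncard := by
        refine Set.ncard_le_ncard ?_
        rintro y ⟨rfl | hy, hyP⟩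
        · exact Set.mem_insert y _
        · exact Set.mem_insert_of_mem x (by by_contra hb; exact hyP ⟨hy, hb⟩)
    _ ≤ (boundary H P).ncard + 1 := Set.ncard_insert_le _ _
    _ ≤ k := h

lemma boundary_insert_subset {F P : Set W} {c d : W} (hP : boundary H P ⊆ insert c F)
    (hc : c ∉ F → H.neighborSet c ⊆ insert d P) : boundary H (insert d P) ⊆ insert d F := by
  rintro z ⟨rfl | hz, w, hw, hzw⟩
  · exact Set.mem_insert z F
  by_cases hzF : z ∈ F
  · exact Set.mem_insert_of_mem d hzF
  rcases hP ⟨hz, w, fun hwP => hw (Set.mem_insert_of_mem d hwP), hzw⟩ with rfl | hzF'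
  · exact absurd (hc hzF hzw) hw
  · exact absurd hzF' hzF

lemma reflTransGen_sweep [Finite W] {F P : Set W} {c b : W} (p : H.Walk c b) (hp : p.IsPath)
    (hcP : c ∈ P) (hP : boundary H P ⊆ insert c F)
    (hnbr : ∀ x ∈ p.support, x ∉ F → ∀ y, H.Adj x y → s(x, y) ∉ p.edges → y ∈ P) :
    Relation.ReflTransGen (SearchStep H (F.ncard + 2)) P (P ∪ {x | x ∈ p.support}) ∧
      boundary H (P ∪ {x | x ∈ p.support}) ⊆ insert b F := by
  induction p generalizing P with
  | nil => simpa [Set.insert_eq_of_mem hcP] using ⟨Relation.ReflTransGen.refl, hP⟩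
  | @cons c d b hcd q ih =>
    obtain ⟨hq, hcq⟩ := (Walk.cons_isPath_iff hcd q).mp hp
    have hstep : SearchStep H (F.ncard + 2) P (insert d P) :=
      searchStep_insert d <| calc
        (boundary H P).ncard ≤ (insert c F).ncard := Set.ncard_le_ncard hP
        _ ≤ F.ncard + 1 := Set.ncard_insert_le c F
        _ < F.ncard + 2 := by omega
    have hbd : boundary H (insert d P) ⊆ insert d F := by
      refine boundary_insert_subset hP fun hcF y hy => ?_
      by_cases he : s(c, y) = s(c, d)
      · exact .inl (Sym2.congr_right.mp he)
      · refine .inr (hnbr c (Walk.start_mem_support _) hcF y hy ?_)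
        simpa [he] using fun hq => hcq (q.fst_mem_support_of_mem_edges hq)
    have hnbr' : ∀ x ∈ q.support, x ∉ F → ∀ y, H.Adj x y → s(x, y) ∉ q.edges →
        y ∈ insert d P := by
      intro x hx hxF y hy hyq
      by_cases he : s(x, y) = s(c, d)
      · rcases Sym2.eq_iff.mp he with ⟨-, rfl⟩ | ⟨-, rfl⟩
        exacts [Set.mem_insert y P, Set.mem_insert_of_mem d hcP]
      · exact Set.mem_insert_of_mem d
          (hnbr x (List.mem_cons_of_mem c hx) hxF y hy (by simp [he, hyq]))
    obtain ⟨hreach, hbd'⟩ := ih hq (Set.mem_insert d P) hbd hnbr'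
    have hset : insert d P ∪ {x | x ∈ q.support} = P ∪ {x | x ∈ (Walk.cons hcd q).support} := by
      ext x
      have := q.start_mem_support
      simp only [Set.mem_union, Set.mem_insert_iff, Set.mem_ofPred_eq, Walk.support_cons,
        List.mem_cons]
      grind
    exact ⟨.head hstep (hset ▸ hreach), hset ▸ hbd'⟩

end Search

namespace SubdivisionData

variable {G : SimpleGraph V} {H : SimpleGraph W}

def refl (H : SimpleGraph W) : SubdivisionData H H where
  f := id
  inj := fun _ _ h => h
  walk := fun h => Walk.cons h Walk.nil
  isPath := fun h => by simp [Walk.cons_isPath_iff, h.ne]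
  symm := fun h => by simp
  disj := fun _ _ _ w _ _ => ⟨w, rfl⟩
  branch := fun h w hw _ => by simpa using hw
  cover_vert := fun w => Or.inl ⟨w, rfl⟩
  cover_edge := fun e he => by
    induction e with
    | _ u v => exact ⟨u, v, he, List.mem_cons.mpr (Or.inl rfl)⟩

lemma finite [Finite V] (D : SubdivisionData G H) : Finite W := by
  refine Set.finite_univ_iff.mp (((Set.finite_range D.f).union (Set.finite_iUnion fun u =>
    Set.finite_iUnion fun v => Set.finite_iUnion fun h : G.Adj u v =>
      (D.walk h).support.finite_toSet)).subset fun w _ => ?_)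
  rcases D.cover_vert w with hw | ⟨u, v, h, hw⟩
  · exact .inl hw
  · exact .inr (Set.mem_iUnion₂.mpr ⟨u, v, Set.mem_iUnion.mpr ⟨h, hw⟩⟩)

lemma mem_edges_of_adj (D : SubdivisionData G H) {u v : V} (h : G.Adj u v) {x y : W}
    (hx : x ∈ (D.walk h).support) (hxF : x ∉ Set.range D.f) (hxy : H.Adj x y) :
    s(x, y) ∈ (D.walk h).edges := by
  obtain ⟨u', v', h', hm⟩ := D.cover_edge s(x, y) hxy
  by_cases huv : s(u, v) = s(u', v')
  · rcases Sym2.eq_iff.mp huv with ⟨rfl, rfl⟩ | ⟨rfl, rfl⟩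
    · exact hm
    · rwa [show h' = h.symm from rfl, D.symm h, Walk.edges_reverse, List.mem_reverse] at hm
  · exact absurd (D.disj h h' huv x hx (Walk.fst_mem_support_of_mem_edges _ hm)) hxF

lemma reflTransGen_union_support [Finite W] (D : SubdivisionData G H) {u v : V}
    (h : G.Adj u v) {B : Set W} (hFB : Set.range D.f ⊆ B) (hB : boundary H B ⊆ Set.range D.f) :
    Relation.ReflTransGen (SearchStep H ((Set.range D.f).ncard + 2)) B
        (B ∪ {x | x ∈ (D.walk h).support}) ∧
      boundary H (B ∪ {x | x ∈ (D.walk h).support}) ⊆ Set.range D.f := by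
  have hfv : D.f v ∈ Set.range D.f := ⟨v, rfl⟩
  obtain ⟨hreach, hbd⟩ := reflTransGen_sweep (D.walk h) (D.isPath h) (hFB ⟨u, rfl⟩)
    (hB.trans (Set.subset_insert _ _))
    fun x hx hxF y hxy he => absurd (D.mem_edges_of_adj h hx hxF hxy) he
  exact ⟨hreach, by rwa [Set.insert_eq_of_mem hfv] at hbd⟩

lemma reflTransGen_empty_univ [Finite W] (D : SubdivisionData G H) :
    Relation.ReflTransGen (SearchStep H ((Set.range D.f).ncard + 2)) ∅ Set.univ := by
  set k := (Set.range D.f).ncard + 2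
  set R : Set (Set W) := {B | Relation.ReflTransGen (SearchStep H k) ∅ B ∧
    Set.range D.f ⊆ B ∧ boundary H B ⊆ Set.range D.f}
  have hF : Set.range D.f ∈ R :=
    ⟨.single ⟨Set.empty_subset _, by simp [k]⟩, subset_rfl, fun _ hx => hx.1⟩
  obtain ⟨B, ⟨hreach, hFB, hB⟩, hmax⟩ := (Set.toFinite R).exists_maximal ⟨_, hF⟩
  suffices B = Set.univ from this ▸ hreach
  refine Set.eq_univ_of_forall fun w => ?_
  rcases D.cover_vert w with hw | ⟨u, v, h, hw⟩
  · exact hFB hw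
  · obtain ⟨hstep, hbd⟩ := D.reflTransGen_union_support h hFB hB
    exact hmax ⟨hreach.trans hstep, hFB.trans Set.subset_union_left, hbd⟩
      Set.subset_union_left (Set.mem_union_right B hw)

end SubdivisionData

/-- For every finite simple graph `G`, `in_t(G) ≤ |V(G)| + 2`. -/
theorem topInspectionNumber_le_card {V : Type} [Fintype V] (G : SimpleGraph V) :
    topInspectionNumber G ≤ Fintype.card V + 2 := by
  refine Nat.sInf_le fun W H ⟨D⟩ => ⟨W, H, ⟨SubdivisionData.refl H⟩, Nat.sInf_le ?_⟩
  have := D.finite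
  have hF : (Set.range D.f).ncard = Fintype.card V := by
    rw [Set.ncard_range_of_injective D.inj, Nat.card_eq_fintype_card]
  exact hF ▸ successfulSearch_of_reflTransGen D.reflTransGen_empty_univ

end Inspection
end

section
/- Suppose G is a finite simple graph containing no subdivision of K_4 as a subgraph, and H is a connected subgraph of G containing distinct vertices a, b such that a and b are not adjacent in H, the graph H − {a,b} is connected, and there exists a path from a to b in the graph obtained from G by deleting all vertices of H other than a and b. Then there exists a vertex v ∈ V(H) \ {a,b} such that a and b lie in different connected components of H − v. -/
/-!
Suppose no vertex of `S = H − {a, b}` separates `a` from `b` in `H`. Then no single vertex of `S`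
separates the neighbours of `a` from those of `b` inside `S`, so by Menger's theorem for two paths
there are two disjoint such paths; closed up with `a` and `b` they become two internally disjoint
`a`–`b` paths `Q₁`, `Q₂` of `H`. With the `a`–`b` path outside `H` they form a theta graph, and as
`S` is connected, some path inside `S` joins `Q₁` to `Q₂` and meets them only at its ends. A theta
graph with such a bridge between two of its branches is a subdivision of `K₄`.
-/

open SimpleGraph

namespace Inspection

variable {V : Type*} {W : Type*}

section

variable {G : SimpleGraph V}

lemma _root_.SimpleGraph.Walk.IsPath.eq_of_mem_takeUntil_of_mem_dropUntil [DecidableEq V]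
    {u v x z : V} {p : G.Walk u v} (hp : p.IsPath) (hx : x ∈ p.support)
    (h₁ : z ∈ (p.takeUntil x hx).support) (h₂ : z ∈ (p.dropUntil x hx).support) : z = x := by
  by_contra hzx
  exact Walk.IsPath.ne_of_mem_support_of_append ((p.take_spec hx).symm ▸ hp) hzx h₁ h₂ rfl

lemma _root_.SimpleGraph.Walk.exists_prefix_to_first_mem {u v : V} (w : G.Walk u v) {Y : Set V}
    (hY : ∃ y ∈ Y, y ∈ w.support) : ∃ y ∈ Y, ∃ r : G.Walk u y,
      (∀ z ∈ r.support, z ∈ w.support) ∧ ∀ z ∈ r.support, z ∈ Y → z = y := by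
  induction w with
  | nil =>
    obtain ⟨y, hy, hyw⟩ := hY
    obtain rfl : y = _ := by simpa using hyw
    exact ⟨y, hy, .nil, by simp, by simp⟩
  | @cons u u' v h w ih =>
    by_cases hu : u ∈ Y
    · exact ⟨u, hu, .nil, by simp, by simp⟩
    obtain ⟨y, hy, r, hrw, hrY⟩ := ih <| by
      obtain ⟨y, hy, hyw⟩ := hY
      exact ⟨y, hy, ((w.cons h).mem_support_iff.1 hyw).resolve_left (by rintro rfl; exact hu hy)⟩
    refine ⟨y, hy, .cons h r, fun z hz => ?_, fun z hz hzY => ?_⟩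
    · rcases List.mem_cons.1 hz with rfl | hz
      exacts [List.mem_cons_self, List.mem_cons_of_mem _ (hrw z hz)]
    · rcases List.mem_cons.1 hz with rfl | hz
      exacts [(hu hzY).elim, hrY z hz hzY]

lemma exists_walk_of_reachable_induce {s : Set V} {x y : s} (h : (G.induce s).Reachable x y) :
    ∃ w : G.Walk x y, ∀ z ∈ w.support, z ∈ s := by
  obtain ⟨w⟩ := h
  refine ⟨w.map (Embedding.induce s).toHom, fun z hz => ?_⟩
  obtain ⟨z', -, rfl⟩ := List.mem_map.1 ((Walk.support_map _ _) ▸ hz)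
  exact z'.2

structure WalkIn (G : SimpleGraph V) (t A B : Set V) where
  {src : V}
  {tgt : V}
  walk : G.Walk src tgt
  src_mem : src ∈ A
  tgt_mem : tgt ∈ B
  support_subset : ∀ z ∈ walk.support, z ∈ t

namespace WalkIn

variable {t t' A A' B B' : Set V}

def mono (p : WalkIn G t A B) (ht : t ⊆ t') (hA : A ⊆ A') (hB : B ⊆ B') : WalkIn G t' A' B' :=
  ⟨p.walk, hA p.src_mem, hB p.tgt_mem, fun z hz => ht (p.support_subset z hz)⟩

def reverse (p : WalkIn G t A B) : WalkIn G t B A :=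
  ⟨p.walk.reverse, p.tgt_mem, p.src_mem, fun z hz => p.support_subset z (by simpa using hz)⟩

def single {x : V} (ht : x ∈ t) (hA : x ∈ A) (hB : x ∈ B) : WalkIn G t A B :=
  ⟨Walk.nil, hA, hB, by simpa using ht⟩

def edge {x y : V} (h : G.Adj x y) (hx : x ∈ t) (hy : y ∈ t) (hA : x ∈ A) (hB : y ∈ B) :
    WalkIn G t A B :=
  ⟨h.toWalk, hA, hB, by simp [hx, hy]⟩

def append {k : V} (p : WalkIn G t A {k}) (q : WalkIn G t' {k} B) : WalkIn G (t ∪ t') A B :=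
  ⟨p.walk.append (q.walk.copy (q.src_mem.trans p.tgt_mem.symm) rfl), p.src_mem, q.tgt_mem, by
    intro z hz
    rcases (Walk.mem_support_append_iff _ _).1 hz with hz | hz
    · exact .inl (p.support_subset z hz)
    · exact .inr (q.support_subset z (by simpa using hz))⟩

lemma mem_support_append {k z : V} {p : WalkIn G t A {k}} {q : WalkIn G t' {k} B} :
    z ∈ (p.append q).walk.support ↔ z ∈ p.walk.support ∨ z ∈ q.walk.support := by
  simp [append, Walk.mem_support_append_iff]

def bypass [DecidableEq V] (p : WalkIn G t A B) : WalkIn G t A B :=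
  ⟨p.walk.bypass, p.src_mem, p.tgt_mem,
    fun z hz => p.support_subset z (p.walk.support_bypass_subset_support hz)⟩

def mapLe {G' : SimpleGraph V} (hle : G ≤ G') (p : WalkIn G t A B) : WalkIn G' t A B :=
  ⟨p.walk.mapLe hle, p.src_mem, p.tgt_mem, by simpa using p.support_subset⟩

@[simp]
lemma mem_support_reverse {z : V} (p : WalkIn G t A B) :
    z ∈ p.reverse.walk.support ↔ z ∈ p.walk.support := by
  simp [reverse]

lemma mem_support_of_tgt_eq {x : V} (p : WalkIn G t A B) (h : p.tgt = x) :
    x ∈ p.walk.support := by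
  rw [← h]
  exact p.walk.end_mem_support

end WalkIn

def reach (G : SimpleGraph V) (t A : Set V) : Set V :=
  {x | Nonempty (WalkIn G t A {x})}

lemma reach_subset {t A : Set V} : reach G t A ⊆ t :=
  fun _ ⟨p⟩ => Set.mem_singleton_iff.1 p.tgt_mem ▸ p.support_subset _ p.walk.end_mem_support

lemma reach_mono {t t' A : Set V} (h : t ⊆ t') : reach G t A ⊆ reach G t' A :=
  fun _ ⟨p⟩ => ⟨p.mono h le_rfl le_rfl⟩

lemma mem_reach_of_adj {t A : Set V} {x y : V} (hx : x ∈ reach G t A) (hxy : G.Adj x y)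
    (hy : y ∈ t) : y ∈ reach G t A := by
  obtain ⟨p⟩ := hx
  exact ⟨(p.append (WalkIn.edge hxy (reach_subset ⟨p⟩) hy (Set.mem_singleton x)
    (Set.mem_singleton y))).mono (by simp) le_rfl le_rfl⟩

lemma WalkIn.support_subset_reach {t A B : Set V} (p : WalkIn G t A B) :
    ∀ z ∈ p.walk.support, z ∈ reach G t A := by
  classical
  intro z hz
  exact ⟨⟨p.walk.takeUntil z hz, p.src_mem, rfl,
    fun y hy => p.support_subset y (p.walk.support_takeUntil_subset_support hz hy)⟩⟩

def WalkIn.restrictReach {t A B : Set V} (p : WalkIn G t A B) : WalkIn G (reach G t A) A B :=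
  ⟨p.walk, p.src_mem, p.tgt_mem, p.support_subset_reach⟩

lemma exists_walkIn_to_cut {t K A B : Set V} (p : WalkIn G t A B)
    (hcut : IsEmpty (WalkIn G (t \ K) A B)) :
    ∃ k ∈ K, k ∈ t ∧ Nonempty (WalkIn G (reach G (t \ K) A ∪ {k}) A {k}) := by
  have hsrc_t := p.support_subset _ p.walk.start_mem_support
  by_cases hsrc : p.src ∈ K
  · exact ⟨p.src, hsrc, hsrc_t, ⟨.single (.inr rfl) p.src_mem rfl⟩⟩
  have hsrc' : p.src ∈ reach G (t \ K) A := ⟨.single ⟨hsrc_t, hsrc⟩ p.src_mem rfl⟩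
  have htgt : p.tgt ∉ reach G (t \ K) A := fun ⟨q⟩ =>
    hcut.false (q.mono le_rfl le_rfl (by simpa using p.tgt_mem))
  obtain ⟨d, hd, hfst, hsnd⟩ := p.walk.exists_boundary_dart _ hsrc' htgt
  have hsnd_t : d.snd ∈ t := p.support_subset _ (p.walk.dart_snd_mem_support_of_mem_darts hd)
  have hsnd_K : d.snd ∈ K := by_contra fun h => hsnd (mem_reach_of_adj hfst d.adj ⟨hsnd_t, h⟩)
  obtain ⟨q⟩ := hfst
  refine ⟨d.snd, hsnd_K, hsnd_t, ⟨(q.restrictReach.append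
    (.edge (t := reach G (t \ K) A ∪ {d.snd}) d.adj (Or.inl ⟨q⟩) (Or.inr rfl)
      (Set.mem_singleton _) (Set.mem_singleton _))).mono (by simp) le_rfl le_rfl⟩⟩

def DisjointPair (G : SimpleGraph V) (s A B : Set V) : Prop :=
  ∃ p q : WalkIn G s A B, p.walk.support.Disjoint q.walk.support

def NoCutVertex (G : SimpleGraph V) (s A B : Set V) : Prop :=
  ∀ v ∈ s, Nonempty (WalkIn G (s \ {v}) A B)

lemma DisjointPair.mono {s s' A B : Set V} (h : DisjointPair G s A B) (hs : s ⊆ s') :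
    DisjointPair G s' A B :=
  let ⟨p, q, hpq⟩ := h
  ⟨p.mono hs le_rfl le_rfl, q.mono hs le_rfl le_rfl, hpq⟩

section Menger

variable {s A B : Set V}

lemma disjointPair_of_mem_inter {c : V} (hcs : c ∈ s) (hcA : c ∈ A) (hcB : c ∈ B)
    (hsep : NoCutVertex G s A B) : DisjointPair G s A B := by
  obtain ⟨q⟩ := hsep c hcs
  refine ⟨.single hcs hcA hcB, q.mono Set.sdiff_subset le_rfl le_rfl, ?_⟩
  intro z hz hzq
  obtain rfl : z = c := by simpa [WalkIn.single] using hz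
  exact (q.support_subset z hzq).2 rfl

lemma WalkIn.exists_adj {t : Set V} (p : WalkIn G t A B) (hsub : t ⊆ A ∪ B)
    (hAB : ∀ c ∈ t, c ∈ A → c ∉ B) : ∃ x ∈ A, ∃ y ∈ B, x ∈ t ∧ y ∈ t ∧ G.Adj x y := by
  obtain ⟨d, hd, hfst, hsnd⟩ := p.walk.exists_boundary_dart A p.src_mem
    (hAB _ (p.support_subset _ p.walk.end_mem_support) · p.tgt_mem)
  have hsnd_t := p.support_subset _ (p.walk.dart_snd_mem_support_of_mem_darts hd)
  exact ⟨_, hfst, _, (hsub hsnd_t).resolve_left hsnd,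
    p.support_subset _ (p.walk.dart_fst_mem_support_of_mem_darts hd), hsnd_t, d.adj⟩

lemma disjointPair_of_adj (hAB : ∀ c ∈ s, c ∈ A → c ∉ B) {x₁ y₁ x₂ y₂ : V}
    (h₁ : G.Adj x₁ y₁) (h₂ : G.Adj x₂ y₂) (hx₁ : x₁ ∈ s) (hy₁ : y₁ ∈ s) (hx₂ : x₂ ∈ s)
    (hy₂ : y₂ ∈ s) (hx₁A : x₁ ∈ A) (hy₁B : y₁ ∈ B) (hx₂A : x₂ ∈ A) (hy₂B : y₂ ∈ B)
    (hx : x₁ ≠ x₂) (hy : y₁ ≠ y₂) : DisjointPair G s A B := by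
  refine ⟨.edge h₁ hx₁ hy₁ hx₁A hy₁B, .edge h₂ hx₂ hy₂ hx₂A hy₂B, ?_⟩
  have h₁₂ : x₁ ≠ y₂ := fun h => hAB x₁ hx₁ hx₁A (h ▸ hy₂B)
  have h₂₁ : y₁ ≠ x₂ := fun h => hAB x₂ hx₂ hx₂A (h ▸ hy₁B)
  simpa [WalkIn.edge] using ⟨⟨Ne.symm hx, h₂₁.symm⟩, h₁₂.symm, Ne.symm hy⟩

lemma disjointPair_of_subset_union (hsub : s ⊆ A ∪ B) (hAB : ∀ c ∈ s, c ∈ A → c ∉ B)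
    (hne : s.Nonempty) (hsep : NoCutVertex G s A B) :
    DisjointPair G s A B := by
  have edge_avoiding : ∀ v ∈ s, ∃ x ∈ A, ∃ y ∈ B, x ∈ s \ {v} ∧ y ∈ s \ {v} ∧ G.Adj x y :=
    fun v hv => (hsep v hv).some.exists_adj (Set.sdiff_subset.trans hsub) (fun c hc => hAB c hc.1)
  obtain ⟨v, hv⟩ := hne
  obtain ⟨x₁, hx₁A, y₁, hy₁B, hx₁, hy₁, h₁⟩ := edge_avoiding v hv
  obtain ⟨x₂, hx₂A, y₂, hy₂B, hx₂, hy₂, h₂⟩ := edge_avoiding x₁ hx₁.1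
  have hx₂₁ : x₂ ≠ x₁ := hx₂.2
  by_cases hy : y₂ = y₁
  · subst hy
    obtain ⟨x₃, hx₃A, y₃, hy₃B, hx₃, hy₃, h₃⟩ := edge_avoiding y₂ hy₁.1
    have hy₃₂ : y₃ ≠ y₂ := hy₃.2
    by_cases hx : x₃ = x₁
    · subst hx
      exact disjointPair_of_adj hAB h₂ h₃ hx₂.1 hy₂.1 hx₃.1 hy₃.1 hx₂A hy₂B hx₃A hy₃B hx₂₁
        hy₃₂.symm
    · exact disjointPair_of_adj hAB h₁ h₃ hx₁.1 hy₁.1 hx₃.1 hy₃.1 hx₁A hy₁B hx₃A hy₃B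
        (Ne.symm hx) hy₃₂.symm
  · exact disjointPair_of_adj hAB h₁ h₂ hx₁.1 hy₁.1 hx₂.1 hy₂.1 hx₁A hy₁B hx₂A hy₂B
      hx₂₁.symm (Ne.symm hy)

lemma noCutVertex_reach_union {s K A B : Set V} (hK : K ⊆ s)
    (hcut : IsEmpty (WalkIn G (s \ K) A B)) (hsep : NoCutVertex G s A B) :
    NoCutVertex G (reach G (s \ K) A ∪ K) A K := by
  intro v hv
  have hvs : v ∈ s := hv.elim (fun h => (reach_subset h).1) (fun h => hK h)
  obtain ⟨p⟩ := hsep v hvs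
  have hsub : (s \ {v}) \ K ⊆ s \ K := Set.sdiff_subset_sdiff_left Set.sdiff_subset
  obtain ⟨k, hkK, hkv, ⟨q⟩⟩ :=
    exists_walkIn_to_cut p ⟨fun q => hcut.false (q.mono hsub le_rfl le_rfl)⟩
  refine ⟨q.mono ?_ le_rfl (by simpa using hkK)⟩
  rintro w (hw | rfl)
  · exact ⟨.inl (reach_mono hsub hw), (reach_subset hw).1.2⟩
  · exact ⟨.inr hkK, hkv.2⟩

lemma DisjointPair.exists_split {X A : Set V} {z u : V} (hzu : z ≠ u)
    (h : DisjointPair G (X ∪ {z, u}) A {z, u}) :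
    ∃ (p : WalkIn G (X ∪ {z}) A {z}) (q : WalkIn G (X ∪ {u}) A {u}),
      p.walk.support.Disjoint q.walk.support := by
  obtain ⟨p, q, hpq⟩ := h
  have hne : p.tgt ≠ q.tgt := fun h => hpq p.walk.end_mem_support (q.mem_support_of_tgt_eq h.symm)
  wlog hp : p.tgt = z generalizing p q
  · have hpu : p.tgt = u := p.tgt_mem.resolve_left hp
    exact this q p hpq.symm hne.symm (q.tgt_mem.resolve_right fun h => hne (hpu.trans h.symm))
  have hq : q.tgt = u := q.tgt_mem.resolve_left fun h => hne (hp.trans h.symm)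
  refine ⟨⟨p.walk, p.src_mem, hp, fun w hw => ?_⟩, ⟨q.walk, q.src_mem, hq, fun w hw => ?_⟩, hpq⟩
  · rcases p.support_subset w hw with h | rfl | rfl
    exacts [.inl h, .inr rfl, (hpq hw (q.mem_support_of_tgt_eq hq)).elim]
  · rcases q.support_subset w hw with h | rfl | rfl
    exacts [.inl h, (hpq (p.mem_support_of_tgt_eq hp) hw).elim, .inr rfl]

lemma disjointPair_of_split {X Y A B : Set V} {z u : V} (hzu : z ≠ u) (hXY : Disjoint X Y)
    (hX : Disjoint X {z, u}) (hY : Disjoint Y {z, u})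
    (hA : DisjointPair G (X ∪ {z, u}) A {z, u}) (hB : DisjointPair G (Y ∪ {z, u}) B {z, u}) :
    DisjointPair G (X ∪ Y ∪ {z, u}) A B := by
  obtain ⟨p, p', hp⟩ := hA.exists_split hzu
  obtain ⟨q, q', hq⟩ := hB.exists_split hzu
  have cross : ∀ {w z' u' : V}, z' ∈ ({z, u} : Set V) → u' ∈ ({z, u} : Set V) → z' ≠ u' →
      w ∈ X ∪ {z'} → w ∈ Y ∪ {u'} → False := by
    rintro w z' u' hz' hu' hzu' (hwX | rfl) (hwY | rfl)
    · exact Set.disjoint_left.1 hXY hwX hwY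
    · exact Set.disjoint_left.1 hX hwX hu'
    · exact Set.disjoint_left.1 hY hwY hz'
    · exact hzu' rfl
  have hsub : ∀ k ∈ ({z, u} : Set V), X ∪ {k} ∪ (Y ∪ {k}) ⊆ X ∪ Y ∪ {z, u} := by
    intro k hk w hw
    simp only [Set.mem_union, Set.mem_insert_iff, Set.mem_singleton_iff] at hk hw ⊢
    rcases hk with rfl | rfl <;> tauto
  refine ⟨(p.append q.reverse).mono (hsub z (by simp)) le_rfl le_rfl,
    (p'.append q'.reverse).mono (hsub u (by simp)) le_rfl le_rfl, fun w h h' => ?_⟩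
  change w ∈ (p.append q.reverse).walk.support at h
  change w ∈ (p'.append q'.reverse).walk.support at h'
  simp only [WalkIn.mem_support_append, WalkIn.mem_support_reverse] at h h'
  rcases h with h | h <;> rcases h' with h' | h'
  · exact hp h h'
  · exact cross (by simp) (by simp) hzu (p.support_subset w h) (q'.support_subset w h')
  · exact cross (by simp) (by simp) hzu.symm (p'.support_subset w h') (q.support_subset w h)
  · exact hq h h'

lemma disjointPair_of_cut {s A B : Set V} {z u : V} (hzs : z ∈ s) (hus : u ∈ s) (hzu : z ≠ u)
    (hzA : z ∉ A) (hzB : z ∉ B) (hcut : IsEmpty (WalkIn G (s \ {z, u}) A B))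
    (hsep : NoCutVertex G s A B)
    (ih : ∀ s' ⊂ s, ∀ A' B' : Set V, s'.Nonempty →
      NoCutVertex G s' A' B' → DisjointPair G s' A' B') :
    DisjointPair G s A B := by
  set K : Set V := {z, u}
  have hK : K ⊆ s := Set.insert_subset hzs (Set.singleton_subset_iff.2 hus)
  have side : ∀ {A B : Set V}, z ∉ B → IsEmpty (WalkIn G (s \ K) A B) →
      NoCutVertex G s A B → DisjointPair G (reach G (s \ K) A ∪ K) A K := by
    intro A B hzB hcut hsep
    refine ih _ ?_ A K ⟨z, .inr (.inl rfl)⟩ (noCutVertex_reach_union hK hcut hsep)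
    have hsub : reach G (s \ K) A ∪ K ⊆ s :=
      Set.union_subset (reach_subset.trans Set.sdiff_subset) hK
    -- as `z ∉ B`, the end of an `A`–`B` walk avoiding `u` is missing from this side
    obtain ⟨p⟩ := hsep u hus
    have htgt := p.support_subset _ p.walk.end_mem_support
    refine (Set.ssubset_iff_of_subset hsub).2 ⟨p.tgt, htgt.1, ?_⟩
    rintro (⟨q⟩ | htK)
    · obtain ⟨q⟩ := q
      exact hcut.false (q.mono le_rfl le_rfl (by simpa using p.tgt_mem))
    · rcases htK with h | h
      exacts [hzB (h ▸ p.tgt_mem), htgt.2 h]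
  have hAK := side hzB hcut hsep
  have hBK := side hzA ⟨fun p => hcut.false p.reverse⟩ fun v hv => ⟨(hsep v hv).some.reverse⟩
  have hXY : Disjoint (reach G (s \ K) A) (reach G (s \ K) B) :=
    Set.disjoint_left.2 fun _ ⟨p⟩ ⟨q⟩ =>
      hcut.false ((p.append q.reverse).mono (by simp) le_rfl le_rfl)
  have hXK : ∀ A : Set V, Disjoint (reach G (s \ K) A) K :=
    fun A => Set.disjoint_left.2 fun _ hw => (reach_subset hw).2
  exact (disjointPair_of_split hzu hXY (hXK A) (hXK B) hAK hBK).mono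
    (Set.union_subset (Set.union_subset (reach_subset.trans Set.sdiff_subset)
      (reach_subset.trans Set.sdiff_subset)) hK)

-- Induction on `|s|`: unless some vertex can be dropped from `s`, every `z ∈ s` lies in a
-- separator `{z, u}`; for `z ∉ A ∪ B` its two sides are smaller instances whose pairs of walks
-- glue at `z` and `u`, and if `s ⊆ A ∪ B` the walks can be taken to be single edges.
theorem disjointPair_of_noCutVertex {s A B : Set V} (hs : s.Finite) (hne : s.Nonempty)
    (hsep : NoCutVertex G s A B) : DisjointPair G s A B := by
  induction hn : s.ncard using Nat.strong_induction_on generalizing s A B with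
  | _ n ih =>
  have ih' : ∀ s' ⊂ s, ∀ A' B' : Set V, s'.Nonempty →
      NoCutVertex G s' A' B' → DisjointPair G s' A' B' :=
    fun s' hss' A' B' hne' hsep' =>
      ih _ (hn ▸ Set.ncard_lt_ncard hss' hs) (hs.subset hss'.subset) hne' hsep' rfl
  by_cases hinter : ∃ c ∈ s, c ∈ A ∧ c ∈ B
  · obtain ⟨c, hcs, hcA, hcB⟩ := hinter
    exact disjointPair_of_mem_inter hcs hcA hcB hsep
  push Not at hinter
  by_cases hrem : ∃ z ∈ s, NoCutVertex G (s \ {z}) A B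
  · obtain ⟨z, hz, hrem⟩ := hrem
    obtain ⟨p⟩ := hsep z hz
    exact (ih' _ (Set.sdiff_singleton_ssubset.2 hz) A B
      ⟨p.src, p.support_subset _ p.walk.start_mem_support⟩ hrem).mono Set.sdiff_subset
  simp only [NoCutVertex, not_exists, not_and, not_forall, not_nonempty_iff] at hrem
  by_cases hsub : s ⊆ A ∪ B
  · exact disjointPair_of_subset_union hsub hinter hne hsep
  obtain ⟨z, hzs, hz⟩ := Set.not_subset.1 hsub
  obtain ⟨u, ⟨hus, huz⟩, hcut⟩ := hrem z hzs
  rw [Set.sdiff_sdiff, Set.singleton_union] at hcut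
  exact disjointPair_of_cut hzs hus (Ne.symm huz) (fun h => hz (.inl h)) (fun h => hz (.inr h))
    hcut hsep ih'

end Menger

lemma nonempty_walkIn_of_walk {a b : V} (w : G.Walk a b) (hab : a ≠ b) (hnadj : ¬ G.Adj a b) :
    Nonempty (WalkIn G ({z | z ∈ w.support} \ {a, b}) (G.neighborSet a) (G.neighborSet b)) := by
  set t : Set V := {z | z ∈ w.support} \ {a, b}
  by_contra hno
  -- `w` has to leave `{a} ∪ reach G t (G.neighborSet a)` along some edge, and no edge allows it
  have hb : b ∉ insert a (reach G t (G.neighborSet a)) := by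
    rintro (h | h)
    exacts [hab h.symm, (reach_subset h).2 (.inr rfl)]
  obtain ⟨d, hd, hfst, hsnd⟩ := w.exists_boundary_dart _ (Set.mem_insert a _) hb
  have hsnd_w := w.dart_snd_mem_support_of_mem_darts hd
  have hsnd_a : d.snd ≠ a := fun h => hsnd (.inl h)
  rcases hfst with hfst | hfst
  · have hsnd_b : d.snd ≠ b := fun h => hnadj (hfst ▸ h ▸ d.adj)
    exact hsnd (.inr ⟨.single ⟨hsnd_w, by simp [hsnd_a, hsnd_b]⟩ (hfst ▸ d.adj) rfl⟩)
  by_cases hsnd_b : d.snd = b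
  · obtain ⟨p⟩ := hfst
    exact hno ⟨p.mono le_rfl le_rfl (Set.singleton_subset_iff.2 (hsnd_b ▸ d.adj.symm))⟩
  · exact hsnd (.inr (mem_reach_of_adj hfst d.adj ⟨hsnd_w, by simp [hsnd_a, hsnd_b]⟩))

lemma nonempty_walkIn_of_coe_reachable {H : G.Subgraph} {a b : V} (hab : a ≠ b)
    (hnadj : ¬ H.Adj a b) {ha : a ∈ H.verts} {hb : b ∈ H.verts}
    (h : H.coe.Reachable ⟨a, ha⟩ ⟨b, hb⟩) :
    Nonempty (WalkIn G (H.verts \ {a, b}) (G.neighborSet a) (G.neighborSet b)) := by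
  obtain ⟨w⟩ := h
  set w' : H.spanningCoe.Walk a b := w.map ⟨Subtype.val, fun h => h⟩
  have hw' : ∀ z ∈ w'.support, z ∈ H.verts := fun z hz => by
    obtain ⟨z', -, rfl⟩ := List.mem_map.1 ((Walk.support_map _ _) ▸ hz)
    exact z'.2
  obtain ⟨p⟩ := nonempty_walkIn_of_walk w' hab hnadj
  exact ⟨(p.mapLe H.spanningCoe_le).mono (Set.sdiff_subset_sdiff_left hw')
    (fun _ h => H.adj_sub h) (fun _ h => H.adj_sub h)⟩

lemma exists_isPath_bridge {s X Y : Set V} (p : WalkIn G s X Y) : ∃ x ∈ X, ∃ y ∈ Y,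
    ∃ r : G.Walk x y, r.IsPath ∧ (∀ z ∈ r.support, z ∈ s) ∧
      (∀ z ∈ r.support, z ∈ X → z = x) ∧ (∀ z ∈ r.support, z ∈ Y → z = y) := by
  classical
  obtain ⟨y, hy, r₁, hr₁p, hr₁Y⟩ :=
    p.walk.exists_prefix_to_first_mem ⟨p.tgt, p.tgt_mem, p.walk.end_mem_support⟩
  obtain ⟨x, hx, r₂, hr₂r₁, hr₂X⟩ :=
    r₁.reverse.exists_prefix_to_first_mem ⟨p.src, p.src_mem, by simp⟩
  have hsub : ∀ z ∈ r₂.reverse.bypass.support, z ∈ r₁.support := fun z hz => by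
    simpa using hr₂r₁ z (by simpa using r₂.reverse.support_bypass_subset_support hz)
  refine ⟨x, hx, y, hy, r₂.reverse.bypass, r₂.reverse.bypass_isPath,
    fun z hz => p.support_subset z (hr₁p z (hsub z hz)), fun z hz hzX => hr₂X z ?_ hzX,
    fun z hz => hr₁Y z (hsub z hz)⟩
  simpa using r₂.reverse.support_bypass_subset_support hz

namespace WalkIn

variable {t : Set V} {a b z : V} (p : WalkIn G t (G.neighborSet a) (G.neighborSet b))

def close : G.Walk a b :=
  .cons (show G.Adj a p.src from p.src_mem) (p.walk.concat (show G.Adj b p.tgt from p.tgt_mem).symm)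

lemma mem_support_close : z ∈ p.close.support ↔ z = a ∨ z ∈ p.walk.support ∨ z = b := by
  simp [close, Walk.support_concat]

lemma eq_or_eq_of_mem_support_close (hz : z ∈ p.close.support) (hzt : z ∉ t) : z = a ∨ z = b :=
  ((p.mem_support_close.1 hz).imp_right (Or.resolve_left · (hzt <| p.support_subset z ·)))

lemma mem_walk_of_mem_support_close (hz : z ∈ p.close.support) (hza : z ≠ a) (hzb : z ≠ b) :
    z ∈ p.walk.support :=
  ((p.mem_support_close.1 hz).resolve_left hza).resolve_right hzb

lemma isPath_close (hp : p.walk.IsPath) (hab : a ≠ b) (ha : a ∉ t) (hb : b ∉ t) :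
    p.close.IsPath := by
  rw [close, Walk.cons_isPath_iff, Walk.concat_isPath_iff, Walk.support_concat,
    List.mem_append, List.mem_singleton]
  exact ⟨⟨hp, (hb <| p.support_subset b ·)⟩, by
    rintro (h | h)
    exacts [ha (p.support_subset a h), hab h]⟩

end WalkIn

section PathUnion

variable {U : Type*} [LinearOrder U] {F : SimpleGraph U} (g : U → V)
  (P : ∀ {u v : U}, F.Adj u v → u < v → G.Walk (g u) (g v))

-- The first summand only adds the branch vertices, which matters for isolated vertices of `F`.
def pathUnion : G.Subgraph :=
  (⊥ : G.Subgraph).induce (Set.range g) ⊔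
    ⨆ e : {e : U × U // F.Adj e.1 e.2 ∧ e.1 < e.2}, (P e.2.1 e.2.2).toSubgraph

variable {g}

lemma branch_mem_pathUnion (u : U) : g u ∈ (pathUnion g P).verts :=
  Or.inl ⟨u, rfl⟩

variable {P}

lemma toSubgraph_le_pathUnion {u v : U} (h : F.Adj u v) (huv : u < v) :
    (P h huv).toSubgraph ≤ pathUnion g P :=
  le_sup_of_le_right (le_iSup (fun e : {e : U × U // F.Adj e.1 e.2 ∧ e.1 < e.2} =>
    (P e.2.1 e.2.2).toSubgraph) ⟨(u, v), h, huv⟩)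

def liftPath {u v : U} (h : F.Adj u v) (huv : u < v) :
    (pathUnion g P).coe.Walk ⟨g u, branch_mem_pathUnion P u⟩ ⟨g v, branch_mem_pathUnion P v⟩ :=
  (P h huv).mapToSubgraph.map (Subgraph.inclusion (toSubgraph_le_pathUnion h huv))

lemma map_hom_liftPath {u v : U} (h : F.Adj u v) (huv : u < v) :
    (liftPath h huv).map (pathUnion g P).hom = P h huv :=
  (Walk.map_map _ _ _).trans (P h huv).map_mapToSubgraph_hom

def branchPath {u v : U} (h : F.Adj u v) :
    (pathUnion g P).coe.Walk ⟨g u, branch_mem_pathUnion P u⟩ ⟨g v, branch_mem_pathUnion P v⟩ :=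
  if huv : u < v then liftPath h huv
  else (liftPath h.symm (lt_of_le_of_ne (not_lt.1 huv) h.ne.symm)).reverse

lemma branchPath_isPath (hP : ∀ {u v} (h : F.Adj u v) (huv : u < v), (P h huv).IsPath)
    {u v : U} (h : F.Adj u v) : (branchPath (P := P) h).IsPath := by
  unfold branchPath
  split_ifs with huv
  · exact .of_map (f := (pathUnion g P).hom) (map_hom_liftPath h huv ▸ hP h huv)
  · have hvu := lt_of_le_of_ne (not_lt.1 huv) h.ne.symm
    exact (Walk.IsPath.of_map (f := (pathUnion g P).hom)
      (map_hom_liftPath h.symm hvu ▸ hP h.symm hvu)).reverse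

lemma branchPath_symm {u v : U} (h : F.Adj u v) :
    branchPath (P := P) h.symm = (branchPath h).reverse := by
  unfold branchPath
  rcases lt_or_gt_of_ne h.ne with huv | hvu
  · rw [dif_neg (not_lt.2 huv.le), dif_pos huv]
  · rw [dif_pos hvu, dif_neg (not_lt.2 hvu.le), Walk.reverse_reverse]

lemma support_liftPath {u v : U} (h : F.Adj u v) (huv : u < v) :
    (liftPath (P := P) h huv).support.map Subtype.val = (P h huv).support :=
  (Walk.support_map _ _).symm.trans (congrArg Walk.support (map_hom_liftPath h huv))

lemma edges_liftPath {u v : U} (h : F.Adj u v) (huv : u < v) :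
    (liftPath (P := P) h huv).edges.map (Sym2.map Subtype.val) = (P h huv).edges :=
  (Walk.edges_map _ _).symm.trans (congrArg Walk.edges (map_hom_liftPath h huv))

lemma mem_support_liftPath {u v : U} (h : F.Adj u v) (huv : u < v) {w : (pathUnion g P).verts} :
    w ∈ (liftPath h huv).support ↔ (w : V) ∈ (P h huv).support := by
  rw [← List.mem_map_of_injective Subtype.val_injective, support_liftPath]

lemma mem_edges_liftPath {u v : U} (h : F.Adj u v) (huv : u < v) {c d : (pathUnion g P).verts} :
    s(c, d) ∈ (liftPath h huv).edges ↔ s((c : V), (d : V)) ∈ (P h huv).edges := by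
  rw [← List.mem_map_of_injective (Sym2.map.injective Subtype.val_injective), edges_liftPath]
  rfl

lemma exists_of_mem_support_branchPath {u v : U} (h : F.Adj u v) {w : (pathUnion g P).verts}
    (hw : w ∈ (branchPath h).support) : ∃ (u' v' : U) (h' : F.Adj u' v') (huv' : u' < v'),
      s(u', v') = s(u, v) ∧ (w : V) ∈ (P h' huv').support := by
  unfold branchPath at hw
  split_ifs at hw with huv
  · exact ⟨u, v, h, huv, rfl, (mem_support_liftPath h huv).1 hw⟩
  · exact ⟨v, u, h.symm, _, Sym2.eq_swap, (mem_support_liftPath _ _).1 (by simpa using hw)⟩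

end PathUnion

theorem exists_isSubdivision_of_paths {U : Type*} [LinearOrder U] {F : SimpleGraph U} {g : U → V}
    (hg : g.Injective) (P : ∀ {u v : U}, F.Adj u v → u < v → G.Walk (g u) (g v))
    (hP : ∀ {u v} (h : F.Adj u v) (huv : u < v), (P h huv).IsPath)
    (hbranch : ∀ {u v} (h : F.Adj u v) (huv : u < v),
      ∀ z ∈ (P h huv).support, z ∈ Set.range g → z = g u ∨ z = g v)
    (hdisj : ∀ {u v u' v'} (h : F.Adj u v) (huv : u < v) (h' : F.Adj u' v') (huv' : u' < v'),
      (u, v) ≠ (u', v') → ∀ z ∈ (P h huv).support, z ∈ (P h' huv').support → z ∈ Set.range g) :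
    ∃ K : G.Subgraph, IsSubdivision F K.coe := by
  refine ⟨pathUnion g P, ⟨{
    f := fun u => ⟨g u, branch_mem_pathUnion P u⟩
    inj := fun u v huv => hg (congrArg Subtype.val huv)
    walk := branchPath
    isPath := branchPath_isPath hP
    symm := branchPath_symm
    disj := ?_
    branch := ?_
    cover_vert := ?_
    cover_edge := ?_ }⟩⟩
  · intro u v x y h₁ h₂ hne w hw₁ hw₂
    obtain ⟨u₁, v₁, h₁', huv₁, he₁, hw₁⟩ := exists_of_mem_support_branchPath h₁ hw₁
    obtain ⟨u₂, v₂, h₂', huv₂, he₂, hw₂⟩ := exists_of_mem_support_branchPath h₂ hw₂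
    have hne' : (u₁, v₁) ≠ (u₂, v₂) := fun h => by
      obtain ⟨rfl, rfl⟩ := Prod.mk.inj h
      exact hne (he₁.symm.trans he₂)
    obtain ⟨i, hi⟩ := hdisj h₁' huv₁ h₂' huv₂ hne' w hw₁ hw₂
    exact ⟨i, Subtype.ext hi⟩
  · rintro u v h w hw ⟨i, rfl⟩
    obtain ⟨u', v', h', huv', he, hw⟩ := exists_of_mem_support_branchPath h hw
    have hi := hbranch h' huv' _ hw ⟨i, rfl⟩
    rcases Sym2.eq_iff.1 he with ⟨rfl, rfl⟩ | ⟨rfl, rfl⟩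
    exacts [hi.imp Subtype.ext Subtype.ext, hi.symm.imp Subtype.ext Subtype.ext]
  · rintro ⟨w, hw⟩
    simp only [pathUnion, Subgraph.verts_sup, Subgraph.induce_verts, Subgraph.verts_iSup,
      Set.mem_union, Set.mem_iUnion, Set.mem_range] at hw
    rcases hw with ⟨u, rfl⟩ | ⟨⟨⟨u, v⟩, h, huv⟩, hw⟩
    · exact .inl ⟨u, rfl⟩
    · refine .inr ⟨u, v, h, ?_⟩
      rw [branchPath, dif_pos huv, mem_support_liftPath]
      exact (Walk.mem_verts_toSubgraph _).1 hw
  · intro e he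
    induction e using Sym2.ind with | _ c d => ?_
    rcases (Subgraph.sup_adj.1 he) with ⟨-, -, hbot⟩ | hadj
    · exact hbot.elim
    obtain ⟨⟨⟨u, v⟩, h, huv⟩, hadj⟩ := Subgraph.iSup_adj.1 hadj
    refine ⟨u, v, h, ?_⟩
    rw [branchPath, dif_pos huv, mem_edges_liftPath]
    exact Walk.adj_toSubgraph_iff_mem_edges.1 hadj

def k4Path {a b x y : V} (P : G.Walk a b) (Pax : G.Walk a x) (Pay : G.Walk a y)
    (Pbx : G.Walk b x) (Pby : G.Walk b y) (R : G.Walk x y) :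
    ∀ {u v : Fin 4}, u < v → G.Walk (![a, b, x, y] u) (![a, b, x, y] v)
  | 0, 1, _ => P
  | 0, 2, _ => Pax
  | 0, 3, _ => Pay
  | 1, 2, _ => Pbx
  | 1, 3, _ => Pby
  | 2, 3, _ => R
  | ⟨_ + 3, _⟩, ⟨_, _⟩, h => absurd h (by simp only [Fin.mk_lt_mk]; omega)

theorem exists_K4_subdivision_of_theta {a b x y : V} (hab : a ≠ b) {P Q₁ Q₂ : G.Walk a b}
    {R : G.Walk x y} (hP : P.IsPath) (hQ₁ : Q₁.IsPath) (hQ₂ : Q₂.IsPath) (hR : R.IsPath)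
    (hPQ₁ : ∀ z ∈ P.support, z ∈ Q₁.support → z = a ∨ z = b)
    (hPQ₂ : ∀ z ∈ P.support, z ∈ Q₂.support → z = a ∨ z = b)
    (hQ₁Q₂ : ∀ z ∈ Q₁.support, z ∈ Q₂.support → z = a ∨ z = b)
    (hx : x ∈ Q₁.support) (hxa : x ≠ a) (hxb : x ≠ b)
    (hy : y ∈ Q₂.support) (hya : y ≠ a) (hyb : y ≠ b)
    (hRP : ∀ z ∈ R.support, z ∉ P.support)
    (hRQ₁ : ∀ z ∈ R.support, z ∈ Q₁.support → z = x)
    (hRQ₂ : ∀ z ∈ R.support, z ∈ Q₂.support → z = y) :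
    ∃ K : G.Subgraph, IsSubdivision (⊤ : SimpleGraph (Fin 4)) K.coe := by
  classical
  have hxy : x ≠ y := fun h => (hQ₁Q₂ x hx (h ▸ hy)).elim hxa hxb
  set Pax := Q₁.takeUntil x hx
  set Pxb := Q₁.dropUntil x hx
  set Pay := Q₂.takeUntil y hy
  set Pyb := Q₂.dropUntil y hy
  -- the membership facts from which `grind` checks each pair of branch paths below
  have hax : ∀ z ∈ Pax.support, z ∈ Q₁.support :=
    fun _ => (Q₁.support_takeUntil_subset_support hx ·)
  have hxb' : ∀ z ∈ Pxb.support, z ∈ Q₁.support :=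
    fun _ => (Q₁.support_dropUntil_subset_support hx ·)
  have hay : ∀ z ∈ Pay.support, z ∈ Q₂.support :=
    fun _ => (Q₂.support_takeUntil_subset_support hy ·)
  have hyb' : ∀ z ∈ Pyb.support, z ∈ Q₂.support :=
    fun _ => (Q₂.support_dropUntil_subset_support hy ·)
  have hQ₁x : ∀ z ∈ Pax.support, z ∈ Pxb.support → z = x :=
    fun z => hQ₁.eq_of_mem_takeUntil_of_mem_dropUntil hx
  have hQ₂y : ∀ z ∈ Pay.support, z ∈ Pyb.support → z = y :=
    fun z => hQ₂.eq_of_mem_takeUntil_of_mem_dropUntil hy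
  have ha₁ : a ∈ Pax.support := Pax.start_mem_support
  have hb₁ : b ∈ Pxb.support := Pxb.end_mem_support
  have ha₂ : a ∈ Pay.support := Pay.start_mem_support
  have hb₂ : b ∈ Pyb.support := Pyb.end_mem_support
  have hx₁ : x ∈ Pxb.support := Pxb.start_mem_support
  have hy₂ : y ∈ Pyb.support := Pyb.start_mem_support
  have haQ₁ : a ∈ Q₁.support := Q₁.start_mem_support
  have haQ₂ : a ∈ Q₂.support := Q₂.start_mem_support
  have hbQ₁ : b ∈ Q₁.support := Q₁.end_mem_support
  have hbQ₂ : b ∈ Q₂.support := Q₂.end_mem_support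
  have hxR : x ∈ R.support := R.start_mem_support
  have hyR : y ∈ R.support := R.end_mem_support
  refine exists_isSubdivision_of_paths (g := ![a, b, x, y]) ?_
    (fun _ huv => k4Path P Pax Pay Pxb.reverse Pyb.reverse R huv) ?_ ?_ ?_
  · simp [Function.Injective, Fin.forall_fin_succ, hab, hab.symm, hxa, hxa.symm, hxb, hxb.symm,
      hya, hya.symm, hyb, hyb.symm, hxy, hxy.symm]
  · intro u v _ huv
    fin_cases u <;> fin_cases v <;> first
      | exact absurd huv (by decide)
      | exact hP
      | exact hQ₁.takeUntil hx
      | exact hQ₂.takeUntil hy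
      | exact (hQ₁.dropUntil hx).reverse
      | exact (hQ₂.dropUntil hy).reverse
      | exact hR
  · intro u v _ huv z hz
    fin_cases u <;> fin_cases v <;> (try exact absurd huv (by decide)) <;>
      simp [k4Path] at hz ⊢ <;> grind
  · intro u v u' v' _ huv _ huv' hne z hz hz'
    fin_cases u <;> fin_cases v <;> (try exact absurd huv (by decide)) <;>
      fin_cases u' <;> fin_cases v' <;> (try exact absurd huv' (by decide)) <;>
      simp [k4Path] at hz hz' hne ⊢ <;> grind

theorem exists_K4_subdivision_of_disjointPair {s : Set V} {a b : V} (hab : a ≠ b) (has : a ∉ s)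
    (hbs : b ∉ s) (hpair : DisjointPair G s (G.neighborSet a) (G.neighborSet b))
    (hs : (G.induce s).Preconnected)
    (hout : ∃ (ha : a ∈ sᶜ) (hb : b ∈ sᶜ), (G.induce sᶜ).Reachable ⟨a, ha⟩ ⟨b, hb⟩) :
    ∃ K : G.Subgraph, IsSubdivision (⊤ : SimpleGraph (Fin 4)) K.coe := by
  classical
  obtain ⟨p₁, p₂, h₁₂⟩ := hpair
  set q₁ := p₁.bypass
  set q₂ := p₂.bypass
  have hq₁₂ : q₁.walk.support.Disjoint q₂.walk.support := fun z h₁ h₂ =>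
    h₁₂ (p₁.walk.support_bypass_subset_support h₁) (p₂.walk.support_bypass_subset_support h₂)
  have hq₁ : q₁.close.IsPath := q₁.isPath_close p₁.walk.bypass_isPath hab has hbs
  have hq₂ : q₂.close.IsPath := q₂.isPath_close p₂.walk.bypass_isPath hab has hbs
  obtain ⟨w, hw⟩ := exists_walk_of_reachable_induce
    (hs ⟨q₁.src, q₁.support_subset _ q₁.walk.start_mem_support⟩
      ⟨q₂.src, q₂.support_subset _ q₂.walk.start_mem_support⟩)
  obtain ⟨x, hx, y, hy, R, hR, hRs, hRx, hRy⟩ := exists_isPath_bridge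
    (⟨w, q₁.walk.start_mem_support, q₂.walk.start_mem_support, hw⟩ :
      WalkIn G s {z | z ∈ q₁.walk.support} {z | z ∈ q₂.walk.support})
  obtain ⟨_, _, hreach⟩ := hout
  obtain ⟨P, hP⟩ := exists_walk_of_reachable_induce hreach
  have hPs : ∀ z ∈ P.bypass.support, z ∉ s := fun z hz => hP z (P.support_bypass_subset_support hz)
  have hne : ∀ {z}, z ∈ s → z ≠ a ∧ z ≠ b := fun hz => ⟨ne_of_mem_of_not_mem hz has,
    ne_of_mem_of_not_mem hz hbs⟩
  have hxs := q₁.support_subset x hx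
  have hys := q₂.support_subset y hy
  refine exists_K4_subdivision_of_theta hab P.bypass_isPath hq₁ hq₂ hR
    (fun z hz h => q₁.eq_or_eq_of_mem_support_close h (hPs z hz))
    (fun z hz h => q₂.eq_or_eq_of_mem_support_close h (hPs z hz))
    (fun z h₁ h₂ => ?_) (q₁.mem_support_close.2 (.inr (.inl hx))) (hne hxs).1 (hne hxs).2
    (q₂.mem_support_close.2 (.inr (.inl hy))) (hne hys).1 (hne hys).2
    (fun z hz hzP => hPs z hzP (hRs z hz))
    (fun z hz h => hRx z hz (q₁.mem_walk_of_mem_support_close h (hne (hRs z hz)).1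
      (hne (hRs z hz)).2))
    (fun z hz h => hRy z hz (q₂.mem_walk_of_mem_support_close h (hne (hRs z hz)).1
      (hne (hRs z hz)).2))
  by_contra! hz
  exact hq₁₂ (q₁.mem_walk_of_mem_support_close h₁ hz.1 hz.2)
    (q₂.mem_walk_of_mem_support_close h₂ hz.1 hz.2)

end

theorem exists_cut_vertex_separating_general {V : Type} [Fintype V] (G : SimpleGraph V)
    (hK4free : ¬ ∃ K : G.Subgraph, IsSubdivision (⊤ : SimpleGraph (Fin 4)) K.coe)
    (H : G.Subgraph)
    (a b : V) (hab : a ≠ b)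
    (hnadj : ¬ H.Adj a b)
    (hdel : ((H.deleteVerts {a, b}).coe).Connected)
    (hpath : ∃ (pa : a ∈ ((H.verts \ {a, b})ᶜ : Set V))
        (pb : b ∈ ((H.verts \ {a, b})ᶜ : Set V)),
      (SimpleGraph.induce ((H.verts \ {a, b})ᶜ : Set V) G).Reachable ⟨a, pa⟩ ⟨b, pb⟩) :
    ∃ v, v ∈ H.verts ∧ v ≠ a ∧ v ≠ b ∧
      ∀ (pa : a ∈ (H.deleteVerts {v}).verts) (pb : b ∈ (H.deleteVerts {v}).verts),
        ¬ ((H.deleteVerts {v}).coe).Reachable ⟨a, pa⟩ ⟨b, pb⟩ := by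
  by_contra! hcon
  have hsep : NoCutVertex G (H.verts \ {a, b}) (G.neighborSet a) (G.neighborSet b) := by
    intro v hv
    obtain ⟨_, _, hreach⟩ := hcon v hv.1 (fun h => hv.2 (.inl h)) (fun h => hv.2 (.inr h))
    obtain ⟨p⟩ := nonempty_walkIn_of_coe_reachable hab
      (fun h => hnadj (Subgraph.deleteVerts_le.2 h)) hreach
    exact ⟨p.mono Set.sdiff_sdiff_comm.subset le_rfl le_rfl⟩
  obtain ⟨⟨v, hv⟩⟩ := hdel.nonempty
  refine hK4free (exists_K4_subdivision_of_disjointPair hab (by simp) (by simp)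
    (disjointPair_of_noCutVertex (Set.toFinite _) ⟨v, hv⟩ hsep) ?_ hpath)
  exact hdel.preconnected.map ⟨id, fun h => (H.deleteVerts {a, b}).adj_sub h⟩ Function.surjective_id

/-- If `G` contains no subdivision of `K₄` as a subgraph, `H` is a connected
subgraph of `G` with distinct non-adjacent vertices `a`, `b` such that `H − {a,b}` is
connected and there is a path from `a` to `b` in `G` minus the vertices of `H` other than
`a` and `b`, then some vertex of `H` separates `a` from `b` in `H`. -/
theorem exists_cut_vertex_separating {V : Type} [Fintype V] (G : SimpleGraph V)
    (hK4free : ¬ ∃ K : G.Subgraph, IsSubdivision (⊤ : SimpleGraph (Fin 4)) K.coe)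
    (H : G.Subgraph) (hHconn : H.coe.Connected)
    (a b : V) (ha : a ∈ H.verts) (hb : b ∈ H.verts) (hab : a ≠ b)
    (hnadj : ¬ H.Adj a b)
    (hdel : ((H.deleteVerts {a, b}).coe).Connected)
    (hpath : ∃ (pa : a ∈ ((H.verts \ {a, b})ᶜ : Set V))
        (pb : b ∈ ((H.verts \ {a, b})ᶜ : Set V)),
      (SimpleGraph.induce ((H.verts \ {a, b})ᶜ : Set V) G).Reachable ⟨a, pa⟩ ⟨b, pb⟩) :
    ∃ v, v ∈ H.verts ∧ v ≠ a ∧ v ≠ b ∧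
      ∀ (pa : a ∈ (H.deleteVerts {v}).verts) (pb : b ∈ (H.deleteVerts {v}).verts),
        ¬ ((H.deleteVerts {v}).coe).Reachable ⟨a, pa⟩ ⟨b, pb⟩ :=
  exists_cut_vertex_separating_general G hK4free H a b hab hnadj hdel hpath
end Inspection
end
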